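/- arXiv:2408.01237 — 5 statements merged into one kernel-verified Lean document; each statement's English description precedes it below -/
import Mathlib

section
/- Let X ~ IDD(μ, 0, ν) with ∫_ℝ u² ν(du) < ∞, so that Var(X) = ∫_ℝ u² ν(du), and let Y₁ be a random variable, independent of X, with probability density f₁(y) = η₁(y) / ∫_ℝ u² ν(du) on ℝ. Then for every absolutely continuous function g : ℝ → ℝ one has E[ ∫_ℝ (g(X+u) − g(X))² ν(du) ] ≤ Var(X) · E[(g′(X+Y₁))²]. -/
open MeasureTheory ProbabilityTheory Complex Set
open scoped ENNReal

/-- Cauchy–Schwarz for lower Lebesgue integrals. -/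
lemma my_lintegral_sq_le {α : Type*} [MeasurableSpace α] (μ : Measure α)
    {f : α → ℝ≥0∞} (hf : AEMeasurable f μ) :
    (∫⁻ a, f a ∂μ) ^ 2 ≤ μ Set.univ * ∫⁻ a, f a ^ 2 ∂μ := by
  have hpq : Real.HolderConjugate 2 2 := Real.holderConjugate_iff.mpr ⟨one_lt_two, by norm_num⟩
  have h := ENNReal.lintegral_mul_le_Lp_mul_Lq μ hpq hf (aemeasurable_const (b := (1:ℝ≥0∞)))
  simp only [Pi.mul_apply, mul_one, ENNReal.one_rpow, lintegral_one] at h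
  have hsq : ∀ x : ℝ≥0∞, (x ^ (1/2 : ℝ)) ^ (2:ℕ) = x := by
    intro x
    rw [← ENNReal.rpow_natCast (x ^ (1/2:ℝ)) 2, ← ENNReal.rpow_mul]
    norm_num
  calc (∫⁻ a, f a ∂μ) ^ 2
      ≤ ((∫⁻ a, f a ^ (2:ℝ) ∂μ) ^ (1/2:ℝ) * (μ Set.univ) ^ (1/2:ℝ)) ^ 2 :=
        pow_le_pow_left₀ zero_le h 2
    _ = (∫⁻ a, f a ^ (2:ℝ) ∂μ) * μ Set.univ := by
        rw [mul_pow, hsq, hsq]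
    _ = μ Set.univ * ∫⁻ a, f a ^ 2 ∂μ := by
        rw [mul_comm]
        congr 1
        refine lintegral_congr fun a => ?_
        rw [← ENNReal.rpow_natCast (f a) 2]
        norm_num

lemma my_sigmaFinite (ν : Measure ℝ) (hν0 : ν {0} = 0)
    (hν2 : Integrable (fun u : ℝ => u ^ 2) ν) : SigmaFinite ν := by
  have hfin : ∫⁻ u, ENNReal.ofReal (u ^ 2) ∂ν < ⊤ := by
    have := (hasFiniteIntegral_iff_ofReal (f := fun u : ℝ => u ^ 2)
      (Filter.Eventually.of_forall fun u => sq_nonneg u)).mp hν2.2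
    exact this
  refine Measure.sigmaFinite_of_countable
    (S := insert {(0:ℝ)} (Set.range fun n : ℕ => {u : ℝ | 1/(n+1) ≤ |u|})) ?_ ?_ ?_
  · exact (Set.countable_range _).insert _
  · rintro s (rfl | ⟨n, rfl⟩)
    · simp [hν0]
    · set c : ℝ := 1/(n+1) with hc
      have hcpos : 0 < c := by positivity
      have hkey : ENNReal.ofReal (c ^ 2) * ν {u : ℝ | c ≤ |u|} ≤ ∫⁻ u, ENNReal.ofReal (u ^ 2) ∂ν := by
        have hs : MeasurableSet {u : ℝ | c ≤ |u|} :=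
          measurable_abs measurableSet_Ici
        calc ENNReal.ofReal (c ^ 2) * ν {u : ℝ | c ≤ |u|}
            = ∫⁻ u in {u : ℝ | c ≤ |u|}, ENNReal.ofReal (c ^ 2) ∂ν := by
              rw [setLIntegral_const, mul_comm]
          _ ≤ ∫⁻ u in {u : ℝ | c ≤ |u|}, ENNReal.ofReal (u ^ 2) ∂ν := by
              refine setLIntegral_mono' hs fun u hu => ?_
              refine ENNReal.ofReal_le_ofReal ?_
              have : c ^ 2 ≤ |u| ^ 2 := by
                exact pow_le_pow_left₀ hcpos.le hu 2
              simpa [_root_.sq_abs] using this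
          _ ≤ ∫⁻ u, ENNReal.ofReal (u ^ 2) ∂ν := setLIntegral_le_lintegral _ _
      have hne : ENNReal.ofReal (c ^ 2) ≠ 0 := by
        simp [ENNReal.ofReal_eq_zero, not_le, pow_pos hcpos, hcpos.ne']
      by_contra hcon
      push_neg at hcon
      simp only [not_lt, top_le_iff] at hcon
      rw [hcon, ENNReal.mul_top hne] at hkey
      exact (lt_irrefl _ (lt_of_le_of_lt hkey hfin)).elim
  · refine Set.eq_univ_of_forall fun u => ?_
    rcases eq_or_ne u 0 with rfl | hu
    · exact ⟨{0}, Set.mem_insert _ _, rfl⟩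
    · obtain ⟨n, hn⟩ := exists_nat_one_div_lt (abs_pos.mpr hu)
      exact ⟨{v : ℝ | 1/(n+1) ≤ |v|}, Set.mem_insert_of_mem _ ⟨n, rfl⟩, hn.le⟩

lemma my_interval_bound {g₂ : ℝ → ℝ} (hg₂ : Measurable g₂) (x u : ℝ) :
    ENNReal.ofReal ((∫ t in (0:ℝ)..u, g₂ (x + t)) ^ 2)
      ≤ ENNReal.ofReal |u|
        * ∫⁻ t in Set.Ioo (min u 0) (max u 0), ENNReal.ofReal (g₂ (x + t) ^ 2) := by
  set a := min u 0 with ha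
  set b := max u 0 with hb
  have hab : a ≤ b := min_le_max
  set D : ℝ := ∫ t in (0:ℝ)..u, g₂ (x + t) with hD
  have h1 : ENNReal.ofReal |D| ≤ ∫⁻ t in Set.Ioo a b, ENNReal.ofReal |g₂ (x + t)| := by
    have hIoc : (volume.restrict (Set.Ioo a b)) = volume.restrict (Set.Ioc a b) :=
      Measure.restrict_congr_set Ioo_ae_eq_Ioc
    rw [hIoc]
    have habs : ENNReal.ofReal |D| ≤ ∫⁻ t in Set.Ioc a b, ↑‖g₂ (x + t)‖₊ := by
      have hset : D = ∫ t in Set.Ioc a b, g₂ (x + t) ∂volume ∨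
          D = -∫ t in Set.Ioc a b, g₂ (x + t) ∂volume := by
        rcases le_total (0:ℝ) u with h | h
        · left
          rw [hD, intervalIntegral.integral_of_le h, ha, hb, min_eq_right h, max_eq_left h]
        · right
          rw [hD, intervalIntegral.integral_symm, intervalIntegral.integral_of_le h,
            ha, hb, min_eq_left h, max_eq_right h]
      have : ENNReal.ofReal |∫ t in Set.Ioc a b, g₂ (x + t) ∂volume|
          ≤ ∫⁻ t in Set.Ioc a b, ↑‖g₂ (x + t)‖₊ := by
        rw [← Real.enorm_eq_ofReal_abs]
        exact enorm_integral_le_lintegral_enorm _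
      rcases hset with h | h
      · rw [h]; exact this
      · rw [h, abs_neg]; exact this
    refine le_trans habs (le_of_eq (lintegral_congr fun t => ?_))
    exact Real.enorm_eq_ofReal_abs _
  have h2 : (∫⁻ t in Set.Ioo a b, ENNReal.ofReal |g₂ (x + t)|) ^ 2
      ≤ ENNReal.ofReal |u| * ∫⁻ t in Set.Ioo a b, ENNReal.ofReal (g₂ (x + t) ^ 2) := by
    have := my_lintegral_sq_le (volume.restrict (Set.Ioo a b))
      (f := fun t => ENNReal.ofReal |g₂ (x + t)|)
      ((ENNReal.measurable_ofReal.comp ((measurable_abs.comp hg₂).comp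
        (measurable_const_add x))).aemeasurable)
    refine le_trans this (le_of_eq ?_)
    rw [Measure.restrict_apply_univ, Real.volume_Ioo]
    congr 1
    · congr 1
      rw [hb, ha, max_sub_min_eq_abs]; simp
    · refine lintegral_congr fun t => ?_
      rw [← ENNReal.ofReal_pow (abs_nonneg _), _root_.sq_abs]
  calc ENNReal.ofReal (D ^ 2) = (ENNReal.ofReal |D|) ^ 2 := by
        rw [← ENNReal.ofReal_pow (abs_nonneg _), _root_.sq_abs]
    _ ≤ (∫⁻ t in Set.Ioo a b, ENNReal.ofReal |g₂ (x + t)|) ^ 2 :=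
        pow_le_pow_left₀ zero_le h1 2
    _ ≤ ENNReal.ofReal |u| * ∫⁻ t in Set.Ioo a b, ENNReal.ofReal (g₂ (x + t) ^ 2) := h2
/-- **Energy-type bound for infinitely divisible random variables.**
If `X ~ IDD(μ, 0, ν)` has finite second moment and `Y₁`, independent of `X`, has
density `f₁(y) = η₁(y) / ∫ u² ν(du)`, then for every absolutely continuous `g`,
`E[∫ (g(X+u) - g(X))² ν(du)] ≤ Var(X) · E[(g'(X+Y₁))²]`,
where `Var(X) = ∫ u² ν(du)` (the expectations of the nonnegative quantities are
taken as lower Lebesgue integrals, allowing the value `∞`). -/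
theorem energy_bound_IDD
    {Ω : Type*} [MeasureSpace Ω] [IsProbabilityMeasure (ℙ : Measure Ω)]
    (X Y₁ : Ω → ℝ) (hX : Measurable X) (hY₁ : Measurable Y₁)
    (μ : ℝ) (ν : Measure ℝ)
    (hν0 : ν {0} = 0)
    (hνfin : ∫⁻ u : ℝ, ENNReal.ofReal (min 1 (u ^ 2)) ∂ν < ⊤)
    -- X ~ IDD(μ, 0, ν)
    (hcf : ∀ t : ℝ,
      ∫ ω, Complex.exp (Complex.I * t * X ω) ∂ℙ
        = Complex.exp (Complex.I * t * μ
            + ∫ u : ℝ, (Complex.exp (Complex.I * t * u) - 1 - Complex.I * t * u) ∂ν))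
    -- finite second moment of ν : ∫ u² ν(du) < ∞
    (hν2 : Integrable (fun u : ℝ => u ^ 2) ν)
    -- the function η₁
    (η₁ : ℝ → ℝ)
    (hη₁ : ∀ v : ℝ,
      (0 < v → η₁ v = ∫ y in Ioi v, y ∂ν) ∧
      (v < 0 → η₁ v = - ∫ y in Iio v, y ∂ν))
    -- Y₁ is independent of X and has density f₁(y) = η₁(y) / ∫ u² ν(du)
    (hindep : IndepFun X Y₁ ℙ)
    (hY₁law : Measure.map Y₁ ℙ
      = volume.withDensity (fun y => ENNReal.ofReal (η₁ y / ∫ u : ℝ, u ^ 2 ∂ν)))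
    -- g is absolutely continuous with derivative g'
    (g g' : ℝ → ℝ)
    (hg'loc : LocallyIntegrable g' volume)
    (hg : ∀ x : ℝ, g x = g 0 + ∫ t in (0:ℝ)..x, g' t) :
    ∫⁻ ω, (∫⁻ u : ℝ, ENNReal.ofReal ((g (X ω + u) - g (X ω)) ^ 2) ∂ν) ∂ℙ
      ≤ ENNReal.ofReal (∫ u : ℝ, u ^ 2 ∂ν)
          * ∫⁻ ω, ENNReal.ofReal ((g' (X ω + Y₁ ω)) ^ 2) ∂ℙ := by
  classical
  -- measurable representative of g'
  set g₂ : ℝ → ℝ := (hg'loc.aestronglyMeasurable).mk g' with hg₂def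
  have hg₂m : Measurable g₂ :=
    (hg'loc.aestronglyMeasurable).stronglyMeasurable_mk.measurable
  have hg₂ae : g' =ᵐ[volume] g₂ := (hg'loc.aestronglyMeasurable).ae_eq_mk
  set S : ℝ := ∫ u : ℝ, u ^ 2 ∂ν with hSdef
  have hSnn : (0:ℝ) ≤ S := integral_nonneg fun u => sq_nonneg u
  rcases eq_or_lt_of_le hSnn with hS0 | hSpos
  · -- degenerate case : ν = 0
    have hsq : (fun u : ℝ => u ^ 2) =ᵐ[ν] 0 :=
      (integral_eq_zero_iff_of_nonneg (fun u => sq_nonneg u) hν2).mp hS0.symm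
    have h1 : ν {u : ℝ | ¬ u ^ 2 = 0} = 0 := by
      have := hsq
      rw [Filter.EventuallyEq, ae_iff] at this
      simpa using this
    have h2 : ν ({0}ᶜ : Set ℝ) = 0 := by
      have : ({0}ᶜ : Set ℝ) = {u : ℝ | ¬ u ^ 2 = 0} := by
        ext u; simp [pow_eq_zero_iff]
      rw [this]; exact h1
    have hν : ν = 0 := by
      have hle := measure_union_le (μ := ν) ({(0:ℝ)}) ({0}ᶜ)
      rw [Set.union_compl_self, hν0, h2] at hle
      simpa using hle
    simp only [hν, lintegral_zero_measure, lintegral_zero]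
    exact zero_le
  -- main case : 0 < S
  haveI hsf : SigmaFinite ν := my_sigmaFinite ν hν0 hν2
  have hii : ∀ a b : ℝ, IntervalIntegrable g' volume a b := fun a b =>
    intervalIntegrable_iff.mpr
      ((hg'loc.integrableOn_isCompact isCompact_uIcc).mono_set uIoc_subset_uIcc)
  have hgdiff : ∀ x u : ℝ, g (x + u) - g x = ∫ t in (0:ℝ)..u, g₂ (x + t) := by
    intro x u
    have e1 : g (x + u) - g x = ∫ t in x..(x + u), g' t := by
      rw [hg (x + u), hg x]
      have hadd := intervalIntegral.integral_add_adjacent_intervals (hii 0 x) (hii x (x + u))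
      linarith [hadd]
    have e2 : (∫ t in x..(x + u), g' t) = ∫ t in x..(x + u), g₂ t :=
      intervalIntegral.integral_congr_ae (hg₂ae.mono fun t ht _ => ht)
    have e3 : (∫ t in (0:ℝ)..u, g₂ (x + t)) = ∫ t in x..(x + u), g₂ t := by
      have := intervalIntegral.integral_comp_add_left (a := (0:ℝ)) (b := u) (f := g₂) x
      simpa using this
    rw [e1, e2, ← e3]
  set F : ℝ → ℝ≥0∞ := fun y => ENNReal.ofReal (g₂ y ^ 2) with hFdef
  have hFm : Measurable F := ENNReal.measurable_ofReal.comp (hg₂m.pow_const 2)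
  -- the function ψ = ofReal ∘ η₁ (a.e.)
  set ψ : ℝ → ℝ≥0∞ := fun t =>
    if 0 < t then ∫⁻ y in Set.Ioi t, ENNReal.ofReal y ∂ν
    else if t < 0 then ∫⁻ y in Set.Iio t, ENNReal.ofReal (-y) ∂ν
    else 0 with hψdef
  have hψm : Measurable ψ := by
    have m1 : Measurable fun t : ℝ => ∫⁻ y in Set.Ioi t, ENNReal.ofReal y ∂ν := by
      apply Antitone.measurable
      intro s t hst
      exact lintegral_mono_set (Set.Ioi_subset_Ioi hst)
    have m2 : Measurable fun t : ℝ => ∫⁻ y in Set.Iio t, ENNReal.ofReal (-y) ∂ν := by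
      apply Monotone.measurable
      intro s t hst
      exact lintegral_mono_set (Set.Iio_subset_Iio hst)
    exact Measurable.ite measurableSet_Ioi m1
      (Measurable.ite measurableSet_Iio m2 measurable_const)
  have hIntP : ∀ t : ℝ, 0 < t → IntegrableOn (fun y : ℝ => y) (Set.Ioi t) ν := by
    intro t ht
    have h2 : IntegrableOn (fun y : ℝ => t⁻¹ * y ^ 2) (Set.Ioi t) ν :=
      (hν2.restrict (s := Set.Ioi t)).const_mul _
    refine Integrable.mono h2 aestronglyMeasurable_id ?_
    rw [ae_restrict_iff' measurableSet_Ioi]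
    refine Filter.Eventually.of_forall fun y hy => ?_
    have hty : t < y := hy
    have h0y : (0:ℝ) < y := ht.trans hty
    rw [Real.norm_eq_abs, Real.norm_eq_abs, abs_of_pos h0y,
      abs_of_pos (by positivity : (0:ℝ) < t⁻¹ * y ^ 2), inv_mul_eq_div, le_div_iff₀ ht]
    nlinarith
  have hIntN : ∀ t : ℝ, t < 0 → IntegrableOn (fun y : ℝ => -y) (Set.Iio t) ν := by
    intro t ht
    have h2 : IntegrableOn (fun y : ℝ => (-t)⁻¹ * y ^ 2) (Set.Iio t) ν :=
      (hν2.restrict (s := Set.Iio t)).const_mul _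
    refine Integrable.mono h2 (measurable_id.neg.aestronglyMeasurable) ?_
    rw [ae_restrict_iff' measurableSet_Iio]
    refine Filter.Eventually.of_forall fun y hy => ?_
    have hyt : y < t := hy
    have h0y : y < 0 := hyt.trans ht
    have hmt : (0:ℝ) < -t := by linarith
    rw [Real.norm_eq_abs, Real.norm_eq_abs, abs_of_pos (by linarith : (0:ℝ) < -y),
      abs_of_pos (mul_pos (inv_pos.mpr hmt) (by nlinarith : (0:ℝ) < y ^ 2)), inv_mul_eq_div, le_div_iff₀ hmt]
    nlinarith
  have hψeq : ∀ t : ℝ, t ≠ 0 → ENNReal.ofReal (η₁ t) = ψ t := by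
    intro t ht
    rcases lt_or_gt_of_ne ht with hneg | hpos
    · have hψt : ψ t = ∫⁻ y in Set.Iio t, ENNReal.ofReal (-y) ∂ν := by
        simp only [hψdef, if_neg (not_lt.mpr hneg.le), if_pos hneg]
      rw [hψt, (hη₁ t).2 hneg, ← integral_neg]
      refine ofReal_integral_eq_lintegral_ofReal (hIntN t hneg) ?_
      refine ae_restrict_of_forall_mem measurableSet_Iio fun y hy => ?_
      have : y < t := hy
      simp only [Pi.zero_apply]
      linarith
    · have hψt : ψ t = ∫⁻ y in Set.Ioi t, ENNReal.ofReal y ∂ν := by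
        simp only [hψdef, if_pos hpos]
      rw [hψt, (hη₁ t).1 hpos]
      refine ofReal_integral_eq_lintegral_ofReal (hIntP t hpos) ?_
      refine ae_restrict_of_forall_mem measurableSet_Ioi fun y hy => ?_
      have : t < y := hy
      simp only [Pi.zero_apply]
      linarith
  have hne0ae : ∀ᵐ t : ℝ ∂(volume : Measure ℝ), t ≠ 0 := by
    rw [ae_iff]
    simpa using Real.volume_singleton (x := (0:ℝ))
  -- the key pointwise-in-x bound
  have key : ∀ x : ℝ,
      (∫⁻ u : ℝ, ENNReal.ofReal ((g (x + u) - g x) ^ 2) ∂ν) ≤ ∫⁻ t, F (x + t) * ψ t := by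
    intro x
    have habsm : Measurable fun u : ℝ => ENNReal.ofReal |u| := by
      exact ENNReal.measurable_ofReal.comp measurable_abs
    set B : Set (ℝ × ℝ) := {p | p.2 ∈ Set.Ioo (min p.1 0) (max p.1 0)} with hBdef
    have hBmeas : MeasurableSet B := by
      have : B = {p : ℝ × ℝ | min p.1 0 < p.2} ∩ {p : ℝ × ℝ | p.2 < max p.1 0} := rfl
      rw [this]
      exact (measurableSet_lt (measurable_fst.min measurable_const) measurable_snd).inter
        (measurableSet_lt measurable_snd (measurable_fst.max measurable_const))
    set G : ℝ × ℝ → ℝ≥0∞ :=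
      B.indicator (fun p => ENNReal.ofReal |p.1| * F (x + p.2)) with hGdef
    have hGm : Measurable G :=
      Measurable.indicator
        ((ENNReal.measurable_ofReal.comp (measurable_fst.abs)).mul
          (hFm.comp (measurable_const_add x |>.comp measurable_snd))) hBmeas
    calc ∫⁻ u : ℝ, ENNReal.ofReal ((g (x + u) - g x) ^ 2) ∂ν
        ≤ ∫⁻ u : ℝ, (ENNReal.ofReal |u|
            * ∫⁻ t in Set.Ioo (min u 0) (max u 0), F (x + t)) ∂ν := by
          refine lintegral_mono fun u => ?_
          rw [hgdiff x u]
          exact my_interval_bound hg₂m x u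
      _ = ∫⁻ u : ℝ, (∫⁻ t, G (u, t)) ∂ν := by
          refine lintegral_congr fun u => ?_
          have hsec : ∀ t : ℝ, G (u, t)
              = (Set.Ioo (min u 0) (max u 0)).indicator
                  (fun t => ENNReal.ofReal |u| * F (x + t)) t := by
            intro t
            rw [hGdef]
            by_cases ht : t ∈ Set.Ioo (min u 0) (max u 0)
            · rw [Set.indicator_of_mem ht, Set.indicator_of_mem (show (u, t) ∈ B from ht)]
            · rw [Set.indicator_of_notMem ht,
                Set.indicator_of_notMem (show (u, t) ∉ B from ht)]
          rw [lintegral_congr hsec, lintegral_indicator measurableSet_Ioo,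
            lintegral_const_mul]
          exact hFm.comp (measurable_const_add x)
      _ = ∫⁻ t, ∫⁻ u, G (u, t) ∂ν :=
          lintegral_lintegral_swap (μ := ν) (f := fun u t => G (u, t)) hGm.aemeasurable
      _ = ∫⁻ t, F (x + t) * ψ t := by
          refine lintegral_congr_ae ?_
          filter_upwards [hne0ae] with t ht
          rcases lt_or_gt_of_ne ht with hneg | hpos
          · have hsec : ∀ u : ℝ, G (u, t)
                = (Set.Iio t).indicator (fun u => ENNReal.ofReal |u| * F (x + t)) u := by
              intro u
              rw [hGdef]
              by_cases hu : u < t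
              · have hu0 : u < 0 := hu.trans hneg
                have h1 : (u, t) ∈ B :=
                  ⟨by rw [min_eq_left hu0.le]; exact hu,
                   lt_of_lt_of_le hneg (le_max_right u 0)⟩
                rw [Set.indicator_of_mem (Set.mem_Iio.mpr hu), Set.indicator_of_mem h1]
              · have h1 : (u, t) ∉ B := by
                  intro hmem
                  have h2 : min u 0 < t := hmem.1
                  have h3 : min u 0 < 0 := h2.trans hneg
                  have h4 : u < 0 := by
                    rcases le_total u 0 with h | h
                    · rwa [min_eq_left h] at h3
                    · rw [min_eq_right h] at h3; exact absurd h3 (lt_irrefl 0)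
                  rw [min_eq_left h4.le] at h2
                  exact hu h2
                rw [Set.indicator_of_notMem (fun hc => hu (Set.mem_Iio.mp hc)),
                  Set.indicator_of_notMem h1]
            rw [lintegral_congr hsec, lintegral_indicator measurableSet_Iio,
              lintegral_mul_const _ habsm]
            have habs : (∫⁻ u in Set.Iio t, ENNReal.ofReal |u| ∂ν)
                = ∫⁻ y in Set.Iio t, ENNReal.ofReal (-y) ∂ν := by
              refine setLIntegral_congr_fun measurableSet_Iio
                (fun y hy => ?_)
              rw [abs_of_neg (lt_trans hy hneg)]
            rw [habs]
            have hψt : ψ t = ∫⁻ y in Set.Iio t, ENNReal.ofReal (-y) ∂ν := by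
              simp only [hψdef, if_neg (not_lt.mpr hneg.le), if_pos hneg]
            rw [← hψt, mul_comm]
          · have hsec : ∀ u : ℝ, G (u, t)
                = (Set.Ioi t).indicator (fun u => ENNReal.ofReal |u| * F (x + t)) u := by
              intro u
              rw [hGdef]
              by_cases hu : t < u
              · have hu0 : 0 < u := hpos.trans hu
                have h1 : (u, t) ∈ B :=
                  ⟨lt_of_le_of_lt (min_le_right u 0) hpos,
                   by rw [max_eq_left hu0.le]; exact hu⟩
                rw [Set.indicator_of_mem (Set.mem_Ioi.mpr hu), Set.indicator_of_mem h1]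
              · have h1 : (u, t) ∉ B := by
                  intro hmem
                  have h2 : t < max u 0 := hmem.2
                  have h4 : 0 < u := by
                    rcases le_total u 0 with h | h
                    · rw [max_eq_right h] at h2; exact absurd (hpos.trans h2) (lt_irrefl 0)
                    · rcases h.lt_or_eq with h' | h'
                      · exact h'
                      · rw [← h', max_self] at h2; exact absurd (hpos.trans h2) (lt_irrefl 0)
                  rw [max_eq_left h4.le] at h2
                  exact hu h2
                rw [Set.indicator_of_notMem (fun hc => hu (Set.mem_Ioi.mp hc)),
                  Set.indicator_of_notMem h1]
            rw [lintegral_congr hsec, lintegral_indicator measurableSet_Ioi,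
              lintegral_mul_const _ habsm]
            have habs : (∫⁻ u in Set.Ioi t, ENNReal.ofReal |u| ∂ν)
                = ∫⁻ y in Set.Ioi t, ENNReal.ofReal y ∂ν := by
              refine setLIntegral_congr_fun measurableSet_Ioi
                (fun y hy => ?_)
              rw [abs_of_pos (hpos.trans hy)]
            rw [habs]
            have hψt : ψ t = ∫⁻ y in Set.Ioi t, ENNReal.ofReal y ∂ν := by
              simp only [hψdef, if_pos hpos]
            rw [← hψt, mul_comm]
  -- the density of Y₁, in a measurable form
  set d' : ℝ → ℝ≥0∞ := fun t => ψ t / ENNReal.ofReal S with hd'def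
  have hd'm : Measurable d' := hψm.div measurable_const
  have hdd' : (fun y => ENNReal.ofReal (η₁ y / S)) =ᵐ[(volume : Measure ℝ)] d' := by
    filter_upwards [hne0ae] with t ht
    rw [ENNReal.ofReal_div_of_pos hSpos, hd'def, hψeq t ht]
  have hmap : Measure.map Y₁ ℙ = (volume : Measure ℝ).withDensity d' := by
    rw [hY₁law, withDensity_congr_ae hdd']
  have hψd' : ∀ t : ℝ, ψ t = ENNReal.ofReal S * d' t := by
    intro t
    rw [hd'def]
    exact (ENNReal.mul_div_cancel (by simpa using hSpos) ENNReal.ofReal_ne_top).symm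
  -- push forward the right-hand side
  haveI : IsProbabilityMeasure (Measure.map Y₁ ℙ) := Measure.isProbabilityMeasure_map hY₁.aemeasurable
  haveI : IsProbabilityMeasure (Measure.map X ℙ) := Measure.isProbabilityMeasure_map hX.aemeasurable
  have hprod : Measure.map (fun ω => (X ω, Y₁ ω)) ℙ
      = (Measure.map X ℙ).prod (Measure.map Y₁ ℙ) :=
    (indepFun_iff_map_prod_eq_prod_map_map hX.aemeasurable hY₁.aemeasurable).mp hindep
  have hKm : Measurable fun p : ℝ × ℝ => F (p.1 + p.2) * d' p.2 :=
    (hFm.comp (measurable_fst.add measurable_snd)).mul (hd'm.comp measurable_snd)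
  have hFadd : Measurable fun p : ℝ × ℝ => F (p.1 + p.2) :=
    hFm.comp (measurable_fst.add measurable_snd)
  -- null sets are not charged by X + Y₁
  set N : Set ℝ := toMeasurable volume {y | g' y ≠ g₂ y} with hNdef
  have hNm : MeasurableSet N := measurableSet_toMeasurable _ _
  have hNnull : volume N = 0 := by
    rw [hNdef, measure_toMeasurable]
    exact hg₂ae
  have hsetm : MeasurableSet {p : ℝ × ℝ | p.1 + p.2 ∈ N} :=
    (measurable_fst.add measurable_snd) hNm
  have hP : ℙ {ω | X ω + Y₁ ω ∈ N} = 0 := by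
    have h1 : ℙ {ω | X ω + Y₁ ω ∈ N}
        = Measure.map (fun ω => (X ω, Y₁ ω)) ℙ {p : ℝ × ℝ | p.1 + p.2 ∈ N} :=
      (Measure.map_apply (hX.prodMk hY₁) hsetm).symm
    rw [h1, hprod, Measure.prod_apply hsetm]
    have h2 : ∀ x : ℝ, (Measure.map Y₁ ℙ) (Prod.mk x ⁻¹' {p : ℝ × ℝ | p.1 + p.2 ∈ N}) = 0 := by
      intro x
      have hvol : volume ((fun y : ℝ => x + y) ⁻¹' N) = 0 := by
        rw [measure_preimage_add]
        exact hNnull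
      have hpre : Prod.mk x ⁻¹' {p : ℝ × ℝ | p.1 + p.2 ∈ N} = (fun y : ℝ => x + y) ⁻¹' N := rfl
      rw [hpre, hmap]
      exact (withDensity_absolutelyContinuous volume d') hvol
    have h3 : ∀ x : ℝ, (Measure.map Y₁ ℙ) {a : ℝ | x + a ∈ N} = 0 := h2
    simp [h3]
  have RHSeq : ∫⁻ ω, (∫⁻ t, F (X ω + t) * d' t) ∂ℙ
      = ∫⁻ ω, ENNReal.ofReal (g' (X ω + Y₁ ω) ^ 2) ∂ℙ := by
    calc ∫⁻ ω, (∫⁻ t, F (X ω + t) * d' t) ∂ℙ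
        = ∫⁻ x, (∫⁻ t, F (x + t) * d' t) ∂(Measure.map X ℙ) :=
          (lintegral_map hKm.lintegral_prod_right' hX).symm
      _ = ∫⁻ x, (∫⁻ y, F (x + y) ∂(Measure.map Y₁ ℙ)) ∂(Measure.map X ℙ) := by
          refine lintegral_congr fun x => ?_
          rw [hmap, lintegral_withDensity_eq_lintegral_mul volume hd'm
            (show Measurable fun t : ℝ => F (x + t) from hFm.comp (measurable_const_add x))]
          exact lintegral_congr fun t => mul_comm _ _
      _ = ∫⁻ p : ℝ × ℝ, F (p.1 + p.2) ∂((Measure.map X ℙ).prod (Measure.map Y₁ ℙ)) :=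
          (lintegral_prod _ hFadd.aemeasurable).symm
      _ = ∫⁻ p : ℝ × ℝ, F (p.1 + p.2) ∂(Measure.map (fun ω => (X ω, Y₁ ω)) ℙ) := by
          rw [hprod]
      _ = ∫⁻ ω, F (X ω + Y₁ ω) ∂ℙ := lintegral_map hFadd (hX.prodMk hY₁)
      _ = ∫⁻ ω, ENNReal.ofReal (g' (X ω + Y₁ ω) ^ 2) ∂ℙ := by
          refine lintegral_congr_ae ?_
          have hae : ∀ᵐ ω ∂ℙ, X ω + Y₁ ω ∉ N := by
            rw [ae_iff]
            simpa using hP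
          filter_upwards [hae] with ω hω
          have heq : g' (X ω + Y₁ ω) = g₂ (X ω + Y₁ ω) := by
            by_contra h
            exact hω (subset_toMeasurable _ _ h)
          rw [hFdef, heq]
  -- conclusion
  calc ∫⁻ ω, (∫⁻ u : ℝ, ENNReal.ofReal ((g (X ω + u) - g (X ω)) ^ 2) ∂ν) ∂ℙ
      ≤ ∫⁻ ω, (∫⁻ t, F (X ω + t) * ψ t) ∂ℙ := lintegral_mono fun ω => key (X ω)
    _ = ∫⁻ ω, (ENNReal.ofReal S * ∫⁻ t, F (X ω + t) * d' t) ∂ℙ := by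
        refine lintegral_congr fun ω => ?_
        rw [← lintegral_const_mul' _ _ ENNReal.ofReal_ne_top]
        refine lintegral_congr fun t => ?_
        rw [hψd' t]
        ring
    _ = ENNReal.ofReal S * ∫⁻ ω, (∫⁻ t, F (X ω + t) * d' t) ∂ℙ :=
        lintegral_const_mul' _ _ ENNReal.ofReal_ne_top
    _ = ENNReal.ofReal S * ∫⁻ ω, ENNReal.ofReal (g' (X ω + Y₁ ω) ^ 2) ∂ℙ := by
        rw [RHSeq]
end

section
/- Let α, λ⁺, λ⁻ > 0 and μ₀ ∈ ℝ, let G₁ and G₂ be independent gamma random variables with G₁ ~ Ga(α, λ⁺) and G₂ ~ Ga(α, λ⁻), and set X = μ₀ + G₁ − G₂ (so X has the variance-gamma distribution VGD₀(μ₀, α, λ⁺, λ⁻)). Then for every g in the Schwartz space S(ℝ) one has E[(X − μ₀) g(X)] = α · E[ ∫_0^∞ ( e^{−λ⁺u} g(X+u) − e^{−λ⁻u} g(X−u) ) du ]. -/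
open MeasureTheory ProbabilityTheory Set

open scoped NNReal ENNReal

open Function

set_option maxHeartbeats 1000000

namespace VGAux

lemma gammaPDF_eq_coe (a r : ℝ) :
    gammaPDF a r = fun x => ((Real.toNNReal (gammaPDFReal a r x) : ℝ≥0) : ℝ≥0∞) := rfl

lemma integrable_gammaPDFReal {a r : ℝ} (ha : 0 < a) (hr : 0 < r) :
    Integrable (gammaPDFReal a r) := by
  refine ⟨(measurable_gammaPDFReal a r).aestronglyMeasurable, ?_⟩
  have h : ∫⁻ x, ‖gammaPDFReal a r x‖ₑ = 1 := by
    rw [← lintegral_gammaPDF_eq_one ha hr]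
    exact lintegral_congr fun x => Real.enorm_eq_ofReal (gammaPDFReal_nonneg ha hr x)
  unfold HasFiniteIntegral
  rw [h]
  exact ENNReal.one_lt_top

lemma integral_gammaPDFReal_eq_one {a r : ℝ} (ha : 0 < a) (hr : 0 < r) :
    ∫ x, gammaPDFReal a r x = 1 := by
  rw [integral_eq_lintegral_of_nonneg_ae (ae_of_all _ (gammaPDFReal_nonneg ha hr))
    (measurable_gammaPDFReal a r).aestronglyMeasurable]
  rw [show (fun x => ENNReal.ofReal (gammaPDFReal a r x)) = gammaPDF a r from rfl,
    lintegral_gammaPDF_eq_one ha hr, ENNReal.toReal_one]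

lemma integral_gammaMeasure (a r : ℝ) (ha : 0 < a) (hr : 0 < r) (f : ℝ → ℝ) :
    ∫ x, f x ∂(gammaMeasure a r) = ∫ x, gammaPDFReal a r x * f x := by
  rw [gammaMeasure, gammaPDF_eq_coe,
    integral_withDensity_eq_integral_smul ((measurable_gammaPDFReal a r).real_toNNReal)]
  congr 1
  funext x
  rw [NNReal.smul_def, Real.coe_toNNReal _ (gammaPDFReal_nonneg ha hr x), smul_eq_mul]

lemma integrable_gammaMeasure_iff {a r : ℝ} (ha : 0 < a) (hr : 0 < r) (f : ℝ → ℝ) :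
    Integrable f (gammaMeasure a r) ↔ Integrable (fun x => gammaPDFReal a r x * f x) := by
  rw [gammaMeasure, gammaPDF_eq_coe,
    integrable_withDensity_iff_integrable_smul ((measurable_gammaPDFReal a r).real_toNNReal)]
  have h : (fun x => (gammaPDFReal a r x).toNNReal • f x) = fun x => gammaPDFReal a r x * f x := by
    funext x
    rw [NNReal.smul_def, Real.coe_toNNReal _ (gammaPDFReal_nonneg ha hr x), smul_eq_mul]
  rw [h]

lemma mul_gammaPDFReal {a r : ℝ} (ha : 0 < a) (hr : 0 < r) (x : ℝ) :
    x * gammaPDFReal a r x = (a / r) * gammaPDFReal (a + 1) r x := by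
  unfold gammaPDFReal
  rcases le_or_gt 0 x with hx | hx
  · rw [if_pos hx, if_pos hx]
    rcases eq_or_lt_of_le hx with h0 | hx'
    · rw [← h0]
      rw [show a + 1 - 1 = a by ring, Real.zero_rpow ha.ne']
      ring
    · have h1 : x ^ (a + 1 - 1) = x ^ (a - 1) * x := by
        rw [show a + 1 - 1 = (a - 1) + 1 by ring, Real.rpow_add_one hx'.ne']
      rw [Real.Gamma_add_one ha.ne', Real.rpow_add_one hr.ne', h1]
      have hΓ : Real.Gamma a ≠ 0 := (Real.Gamma_pos_of_pos ha).ne'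
      field_simp
  · rw [if_neg (not_le.mpr hx), if_neg (not_le.mpr hx)]
    ring

lemma integrable_id_gammaMeasure {a r : ℝ} (ha : 0 < a) (hr : 0 < r) :
    Integrable (fun x => x) (gammaMeasure a r) := by
  rw [integrable_gammaMeasure_iff ha hr]
  have h : (fun x => gammaPDFReal a r x * x) = fun x => (a / r) * gammaPDFReal (a + 1) r x := by
    funext x
    rw [mul_comm, mul_gammaPDFReal ha hr]
  rw [h]
  exact (integrable_gammaPDFReal (by linarith) hr).const_mul _


lemma pointwise_gamma {a r : ℝ} (ha : 0 < a) (hr : 0 < r) (y : ℝ) :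
    a * ∫ u in Ioi (0:ℝ), Real.exp (-r * u) * gammaPDFReal a r (y - u)
      = y * gammaPDFReal a r y := by
  rcases le_or_gt y 0 with hy | hy
  · have h0 : ∫ u in Ioi (0:ℝ), Real.exp (-r * u) * gammaPDFReal a r (y - u) = 0 := by
      refine setIntegral_eq_zero_of_forall_eq_zero fun u hu => ?_
      have : y - u < 0 := by
        simp only [mem_Ioi] at hu
        linarith
      rw [gammaPDFReal, if_neg (not_le.mpr this), mul_zero]
    rw [h0, mul_zero]
    rcases eq_or_lt_of_le hy with h | h
    · rw [h, zero_mul]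
    · rw [gammaPDFReal, if_neg (not_le.mpr h), mul_zero]
  · have hIoo : ∫ u in Ioi (0:ℝ), Real.exp (-r * u) * gammaPDFReal a r (y - u)
        = ∫ u in Ioo (0:ℝ) y, Real.exp (-r * u) * gammaPDFReal a r (y - u) := by
      have hae : ∀ᵐ x, x ∈ Ioi (0:ℝ) \ Ioo 0 y →
          Real.exp (-r * x) * gammaPDFReal a r (y - x) = 0 := by
        have hy' : ({y}ᶜ : Set ℝ) ∈ ae volume := compl_mem_ae_iff.mpr (measure_singleton y)
        filter_upwards [hy'] with u hu hmem
        have h1 : 0 < u := hmem.1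
        have h2 : ¬(u < y) := fun hlt => hmem.2 ⟨h1, hlt⟩
        have h3 : y - u < 0 := by
          rcases lt_or_eq_of_le (not_lt.mp h2) with h | h
          · linarith
          · exact absurd h.symm hu
        rw [gammaPDFReal, if_neg (not_le.mpr h3), mul_zero]
      exact setIntegral_eq_of_subset_of_ae_diff_eq_zero measurableSet_Ioi.nullMeasurableSet
        Ioo_subset_Ioi_self hae
    have hcongr : ∫ u in Ioo (0:ℝ) y, Real.exp (-r * u) * gammaPDFReal a r (y - u)
        = ∫ u in Ioo (0:ℝ) y,
            (r ^ a / Real.Gamma a * Real.exp (-(r * y))) * (y - u) ^ (a - 1) := by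
      refine setIntegral_congr_fun measurableSet_Ioo fun u hu => ?_
      have h1 : (0:ℝ) < y - u := by
        rcases hu with ⟨_, h2⟩
        linarith
      rw [gammaPDFReal, if_pos h1.le]
      rw [show Real.exp (-r * u) * (r ^ a / Real.Gamma a * (y - u) ^ (a - 1)
            * Real.exp (-(r * (y - u))))
          = (r ^ a / Real.Gamma a) * (Real.exp (-r * u) * Real.exp (-(r * (y - u))))
            * (y - u) ^ (a - 1) by ring, ← Real.exp_add,
        show -r * u + -(r * (y - u)) = -(r * y) by ring]
    have hval : ∫ u in Ioo (0:ℝ) y, (y - u) ^ (a - 1) = y ^ a / a := by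
      rw [← integral_Ioc_eq_integral_Ioo, ← intervalIntegral.integral_of_le hy.le,
        intervalIntegral.integral_comp_sub_left (fun v => v ^ (a - 1)) y, sub_self, sub_zero,
        integral_rpow (Or.inl (by linarith : (-1:ℝ) < a - 1)),
        show a - 1 + 1 = a by ring, Real.zero_rpow ha.ne', sub_zero]
    rw [hIoo, hcongr, integral_const_mul, hval]
    rw [gammaPDFReal, if_pos hy.le]
    have hya : y ^ a = y ^ (a - 1) * y := by
      rw [show a = (a - 1) + 1 by ring, Real.rpow_add_one hy.ne']
      ring_nf
    rw [hya]
    field_simp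


lemma key {a r : ℝ} (ha : 0 < a) (hr : 0 < r) (φ : ℝ → ℝ) (hφc : Continuous φ)
    {C : ℝ} (hφb : ∀ x, ‖φ x‖ ≤ C) :
    ∫ x, x * φ x ∂(gammaMeasure a r)
      = a * ∫ x, (∫ u in Ioi (0:ℝ), Real.exp (-r * u) * φ (x + u)) ∂(gammaMeasure a r) := by
  set p := gammaPDFReal a r with hp
  have hpmeas : Measurable p := measurable_gammaPDFReal a r
  have hpnn : ∀ x, 0 ≤ p x := gammaPDFReal_nonneg ha hr
  have hpint : Integrable p := integrable_gammaPDFReal ha hr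
  have hexpint : IntegrableOn (fun u => Real.exp (-r * u)) (Ioi (0:ℝ)) :=
    exp_neg_integrableOn_Ioi 0 hr
  rw [integral_gammaMeasure a r ha hr, integral_gammaMeasure a r ha hr]
  have hHmeas : AEStronglyMeasurable
      (uncurry fun x u => p x * (Real.exp (-r * u) * φ (x + u)))
      (volume.prod (volume.restrict (Ioi 0))) := by
    apply Measurable.aestronglyMeasurable
    apply (hpmeas.comp measurable_fst).mul
    exact ((Real.continuous_exp.comp (continuous_const.mul continuous_snd)).mul
      (hφc.comp (continuous_fst.add continuous_snd))).measurable
  have hKmeas : AEStronglyMeasurable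
      (uncurry fun u y => p (y - u) * (Real.exp (-r * u) * φ y))
      ((volume.restrict (Ioi 0)).prod volume) := by
    apply Measurable.aestronglyMeasurable
    apply (hpmeas.comp (measurable_snd.sub measurable_fst)).mul
    exact ((Real.continuous_exp.comp (continuous_const.mul continuous_fst)).mul
      (hφc.comp continuous_snd)).measurable
  have hHint : Integrable (uncurry fun x u => p x * (Real.exp (-r * u) * φ (x + u)))
      (volume.prod (volume.restrict (Ioi 0))) := by
    refine Integrable.mono' (hpint.mul_prod (hexpint.const_mul C)) hHmeas (ae_of_all _ fun z => ?_)
    have h1 : ‖p z.1 * (Real.exp (-r * z.2) * φ (z.1 + z.2))‖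
        = p z.1 * (Real.exp (-r * z.2) * ‖φ (z.1 + z.2)‖) := by
      simp only [Real.norm_eq_abs, abs_mul, abs_of_nonneg (hpnn z.1),
        abs_of_nonneg (Real.exp_pos (-r * z.2)).le]
    rw [uncurry, h1]
    have h2 := hφb (z.1 + z.2)
    have h3 := hpnn z.1
    have h4 := (Real.exp_pos (-r * z.2)).le
    have h6 := mul_le_mul_of_nonneg_left h2 (mul_nonneg h3 h4)
    nlinarith
  have hKint : Integrable (uncurry fun u y => p (y - u) * (Real.exp (-r * u) * φ y))
      ((volume.restrict (Ioi 0)).prod volume) := by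
    rw [integrable_prod_iff hKmeas]
    constructor
    · refine ae_of_all _ fun u => ?_
      simp only [uncurry_apply_pair]
      have h5 : Integrable (fun y => p (y - u)) := hpint.comp_sub_right u
      have h6 : Integrable (fun y => (Real.exp (-r * u) * φ y) * p (y - u)) := by
        refine h5.bdd_mul (c := Real.exp (-r * u) * C) ((continuous_const.mul hφc).aestronglyMeasurable)
          (ae_of_all _ fun y => ?_)
        rw [norm_mul, Real.norm_eq_abs (Real.exp _), abs_of_pos (Real.exp_pos _)]
        have := hφb y
        have := (Real.exp_pos (-r * u)).le
        nlinarith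
      exact h6.congr (ae_of_all _ fun y => mul_comm _ _)
    · refine Integrable.mono' (g := fun u => Real.exp (-r * u) * C)
        (hexpint.mul_const C) (hKmeas.norm.integral_prod_right') (ae_of_all _ fun u => ?_)
      simp only [uncurry_apply_pair]
      have hnn : 0 ≤ ∫ y, ‖p (y - u) * (Real.exp (-r * u) * φ y)‖ :=
        integral_nonneg fun y => norm_nonneg _
      rw [Real.norm_eq_abs, abs_of_nonneg hnn]
      have hle : ∀ y, ‖p (y - u) * (Real.exp (-r * u) * φ y)‖
          ≤ p (y - u) * (Real.exp (-r * u) * C) := by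
        intro y
        rw [norm_mul, norm_mul, Real.norm_eq_abs (p _), abs_of_nonneg (hpnn _),
          Real.norm_eq_abs (Real.exp _), abs_of_pos (Real.exp_pos _)]
        have h2 := hφb y
        have h3 := hpnn (y - u)
        have h4 := (Real.exp_pos (-r * u)).le
        have h6 := mul_le_mul_of_nonneg_left h2 (mul_nonneg h3 h4)
        nlinarith
      calc ∫ y, ‖p (y - u) * (Real.exp (-r * u) * φ y)‖
          ≤ ∫ y, p (y - u) * (Real.exp (-r * u) * C) :=
            integral_mono_of_nonneg (ae_of_all _ fun y => norm_nonneg _)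
              ((hpint.comp_sub_right u).mul_const _) (ae_of_all _ hle)
        _ = (∫ y, p (y - u)) * (Real.exp (-r * u) * C) := integral_mul_const _ _
        _ = Real.exp (-r * u) * C := by
            rw [integral_sub_right_eq_self p u, hp, integral_gammaPDFReal_eq_one ha hr, one_mul]
  have hpull : ∀ y : ℝ, ∫ u in Ioi (0:ℝ), p (y - u) * (Real.exp (-r * u) * φ y)
      = φ y * ∫ u in Ioi (0:ℝ), Real.exp (-r * u) * p (y - u) := by
    intro y
    rw [← integral_const_mul]
    congr 1; funext u; ring
  calc ∫ x, p x * (x * φ x)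
      = ∫ y, a * ∫ u in Ioi (0:ℝ), p (y - u) * (Real.exp (-r * u) * φ y) := by
        congr 1; funext y
        rw [hpull]
        have hpg := pointwise_gamma ha hr y
        rw [← hp] at hpg
        linear_combination (-φ y) * hpg
    _ = a * ∫ y, ∫ u in Ioi (0:ℝ), p (y - u) * (Real.exp (-r * u) * φ y) :=
        integral_const_mul _ _
    _ = a * ∫ u in Ioi (0:ℝ), ∫ y, p (y - u) * (Real.exp (-r * u) * φ y) := by
        rw [← integral_integral_swap hKint]
    _ = a * ∫ u in Ioi (0:ℝ), ∫ x, p x * (Real.exp (-r * u) * φ (x + u)) := by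
        congr 1
        congr 1; funext u
        rw [← integral_add_right_eq_self (fun y => p (y - u) * (Real.exp (-r * u) * φ y)) u]
        congr 1; funext x
        simp only [add_sub_cancel_right]
    _ = a * ∫ x, ∫ u in Ioi (0:ℝ), p x * (Real.exp (-r * u) * φ (x + u)) := by
        rw [← integral_integral_swap hHint]
    _ = a * ∫ x, p x * ∫ u in Ioi (0:ℝ), Real.exp (-r * u) * φ (x + u) := by
        congr 1
        congr 1; funext x
        rw [integral_const_mul]

end VGAux

/-- **Integral Stein-type identity for the variance-gamma distribution
`VGD₀(μ₀, α, λ⁺, λ⁻)`.** If `X = μ₀ + G₁ - G₂` with `G₁ ~ Ga(α, λ⁺)`, `G₂ ~ Ga(α, λ⁻)`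
independent, then for every Schwartz function `g`,
`E[(X - μ₀) g(X)] = α E[∫₀^∞ (e^{-λ⁺u} g(X+u) - e^{-λ⁻u} g(X-u)) du]`. -/
theorem integral_stein_identity_variance_gamma
    {Ω : Type*} [MeasureSpace Ω] [IsProbabilityMeasure (ℙ : Measure Ω)]
    (α lp lm μ₀ : ℝ) (hα : 0 < α) (hlp : 0 < lp) (hlm : 0 < lm)
    (G₁ G₂ : Ω → ℝ) (hG₁ : Measurable G₁) (hG₂ : Measurable G₂)
    (hG₁law : Measure.map G₁ ℙ = gammaMeasure α lp)
    (hG₂law : Measure.map G₂ ℙ = gammaMeasure α lm)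
    (hGindep : IndepFun G₁ G₂ ℙ)
    -- X = μ₀ + G₁ - G₂ ~ VGD₀(μ₀, α, λ⁺, λ⁻)
    (X : Ω → ℝ) (hXdef : X = fun ω => μ₀ + G₁ ω - G₂ ω)
    (g : SchwartzMap ℝ ℝ) :
    ∫ ω, (X ω - μ₀) * g (X ω) ∂ℙ
      = α * ∫ ω, (∫ u in Ioi (0:ℝ),
          (Real.exp (-lp * u) * g (X ω + u) - Real.exp (-lm * u) * g (X ω - u))) ∂ℙ := by
  haveI hP1 : IsProbabilityMeasure (gammaMeasure α lp) := isProbabilityMeasure_gammaMeasure hα hlp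
  haveI hP2 : IsProbabilityMeasure (gammaMeasure α lm) := isProbabilityMeasure_gammaMeasure hα hlm
  have hX : ∀ ω, X ω = μ₀ + G₁ ω - G₂ ω := fun ω => by rw [hXdef]
  set C := (SchwartzMap.seminorm ℝ 0 0) g with hCdef
  have hgb : ∀ x, ‖g x‖ ≤ C := fun x => g.norm_le_seminorm ℝ x
  have hgc : Continuous g := g.continuous
  set π := (gammaMeasure α lp).prod (gammaMeasure α lm) with hπdef
  have hπ : Measure.map (fun ω => (G₁ ω, G₂ ω)) ℙ = π := by
    rw [hπdef, ← hG₁law, ← hG₂law]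
    exact (indepFun_iff_map_prod_eq_prod_map_map hG₁.aemeasurable hG₂.aemeasurable).mp hGindep
  have hmap : ∀ f : ℝ × ℝ → ℝ, AEStronglyMeasurable f π →
      ∫ ω, f (G₁ ω, G₂ ω) ∂ℙ = ∫ z, f z ∂π := by
    intro f hf
    rw [← hπ] at hf
    rw [← integral_map (hG₁.aemeasurable.prodMk hG₂.aemeasurable) hf, hπ]
  -- first moments
  have hfst : Measure.map Prod.fst π = gammaMeasure α lp := by
    rw [hπdef, Measure.map_fst_prod]; simp
  have hsnd : Measure.map Prod.snd π = gammaMeasure α lm := by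
    rw [hπdef, Measure.map_snd_prod]; simp
  have hmom1 : Integrable (fun z : ℝ × ℝ => z.1) π := by
    have h := (integrable_map_measure
      (f := Prod.fst) (g := fun x : ℝ => x) (μ := π)
      (by rw [hfst]; exact measurable_id.aestronglyMeasurable)
      measurable_fst.aemeasurable).mp (by rw [hfst]; exact VGAux.integrable_id_gammaMeasure hα hlp)
    exact h
  have hmom2 : Integrable (fun z : ℝ × ℝ => z.2) π := by
    have h := (integrable_map_measure
      (f := Prod.snd) (g := fun x : ℝ => x) (μ := π)
      (by rw [hsnd]; exact measurable_id.aestronglyMeasurable)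
      measurable_snd.aemeasurable).mp (by rw [hsnd]; exact VGAux.integrable_id_gammaMeasure hα hlm)
    exact h
  -- integrability of main integrands over π
  have hFmeas : ∀ c₁ c₂ : ℝ, Measurable fun z : ℝ × ℝ => μ₀ + c₁ * z.1 + c₂ * z.2 := by
    intro c₁ c₂; fun_prop
  have hF1int : Integrable (fun z : ℝ × ℝ => z.1 * g (μ₀ + z.1 - z.2)) π := by
    refine Integrable.mono' (hmom1.norm.mul_const C)
      (Measurable.aestronglyMeasurable ?_) (ae_of_all _ fun z => ?_)
    · exact measurable_fst.mul (hgc.measurable.comp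
        ((measurable_const.add measurable_fst).sub measurable_snd))
    · rw [norm_mul]
      exact mul_le_mul_of_nonneg_left (hgb _) (norm_nonneg _)
  have hF2int : Integrable (fun z : ℝ × ℝ => z.2 * g (μ₀ + z.1 - z.2)) π := by
    refine Integrable.mono' (hmom2.norm.mul_const C)
      (Measurable.aestronglyMeasurable ?_) (ae_of_all _ fun z => ?_)
    · exact measurable_snd.mul (hgc.measurable.comp
        ((measurable_const.add measurable_fst).sub measurable_snd))
    · rw [norm_mul]
      exact mul_le_mul_of_nonneg_left (hgb _) (norm_nonneg _)
  have hF0int : Integrable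
      (fun z : ℝ × ℝ => (z.1 - z.2) * g (μ₀ + z.1 - z.2)) π := by
    refine Integrable.mono' ((hmom1.norm.add hmom2.norm).mul_const C)
      (Measurable.aestronglyMeasurable ?_) (ae_of_all _ fun z => ?_)
    · exact (measurable_fst.sub measurable_snd).mul (hgc.measurable.comp
        ((measurable_const.add measurable_fst).sub measurable_snd))
    · rw [norm_mul]
      simp only [Pi.add_apply]
      exact mul_le_mul (norm_sub_le _ _) (hgb _) (norm_nonneg _) (by positivity)
  -- the two inner-integral kernels
  set B1 : ℝ → ℝ := fun z => ∫ u in Ioi (0:ℝ), Real.exp (-lp * u) * g (z + u) with hB1def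
  set B2 : ℝ → ℝ := fun z => ∫ u in Ioi (0:ℝ), Real.exp (-lm * u) * g (z - u) with hB2def
  have hB1m : StronglyMeasurable B1 := by
    apply MeasureTheory.StronglyMeasurable.integral_prod_right
      (f := fun z u => Real.exp (-lp * u) * g (z + u))
    exact ((Real.continuous_exp.comp (continuous_const.mul continuous_snd)).mul
      (hgc.comp (continuous_fst.add continuous_snd))).stronglyMeasurable
  have hB2m : StronglyMeasurable B2 := by
    apply MeasureTheory.StronglyMeasurable.integral_prod_right
      (f := fun z u => Real.exp (-lm * u) * g (z - u))
    exact ((Real.continuous_exp.comp (continuous_const.mul continuous_snd)).mul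
      (hgc.comp (continuous_fst.sub continuous_snd))).stronglyMeasurable
  -- uniform bounds on B1 B2
  have hbd : ∀ (l : ℝ), 0 < l → ∀ (s : ℝ) (z : ℝ),
      ‖∫ u in Ioi (0:ℝ), Real.exp (-l * u) * g (z + s * u)‖
        ≤ C * ∫ u in Ioi (0:ℝ), Real.exp (-l * u) := by
    intro l hl s z
    have hint : IntegrableOn (fun u => Real.exp (-l * u)) (Ioi (0:ℝ)) :=
      exp_neg_integrableOn_Ioi 0 hl
    calc ‖∫ u in Ioi (0:ℝ), Real.exp (-l * u) * g (z + s * u)‖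
        ≤ ∫ u in Ioi (0:ℝ), ‖Real.exp (-l * u) * g (z + s * u)‖ :=
          norm_integral_le_integral_norm _
      _ ≤ ∫ u in Ioi (0:ℝ), C * Real.exp (-l * u) := by
          refine integral_mono_of_nonneg (ae_of_all _ fun u => norm_nonneg _)
            (hint.const_mul C) (ae_of_all _ fun u => ?_)
          dsimp only
          rw [norm_mul, Real.norm_eq_abs (Real.exp _), abs_of_pos (Real.exp_pos _)]
          have h2 := hgb (z + s * u)
          have h4 := (Real.exp_pos (-l * u)).le
          have h5 := norm_nonneg (g (z + s * u))
          nlinarith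
      _ = C * ∫ u in Ioi (0:ℝ), Real.exp (-l * u) := integral_const_mul _ _
  have hB1b : ∀ z, ‖B1 z‖ ≤ C * ∫ u in Ioi (0:ℝ), Real.exp (-lp * u) := by
    intro z
    have h := hbd lp hlp 1
    simp only [one_mul] at h
    exact h z
  have hB2b : ∀ z, ‖B2 z‖ ≤ C * ∫ u in Ioi (0:ℝ), Real.exp (-lm * u) := by
    intro z
    have h := hbd lm hlm (-1)
    simp only [neg_one_mul, ← sub_eq_add_neg] at h
    exact h z
  have hXm : Measurable X := by rw [hXdef]; fun_prop
  -- integrability of B1/B2 compositions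
  have hA1int : Integrable (fun z : ℝ × ℝ => B1 (μ₀ + z.1 - z.2)) π := by
    refine Integrable.mono' (integrable_const (C * ∫ u in Ioi (0:ℝ), Real.exp (-lp * u)))
      ((hB1m.comp_measurable (by fun_prop)).aestronglyMeasurable)
      (ae_of_all _ fun z => hB1b _)
  have hA2int : Integrable (fun z : ℝ × ℝ => B2 (μ₀ + z.1 - z.2)) π := by
    refine Integrable.mono' (integrable_const (C * ∫ u in Ioi (0:ℝ), Real.exp (-lm * u)))
      ((hB2m.comp_measurable (by fun_prop)).aestronglyMeasurable)
      (ae_of_all _ fun z => hB2b _)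
  have hI1int : Integrable (fun ω => B1 (X ω)) ℙ := by
    refine Integrable.mono' (integrable_const (C * ∫ u in Ioi (0:ℝ), Real.exp (-lp * u)))
      ((hB1m.comp_measurable hXm).aestronglyMeasurable)
      (ae_of_all _ fun ω => hB1b _)
  have hI2int : Integrable (fun ω => B2 (X ω)) ℙ := by
    refine Integrable.mono' (integrable_const (C * ∫ u in Ioi (0:ℝ), Real.exp (-lm * u)))
      ((hB2m.comp_measurable hXm).aestronglyMeasurable)
      (ae_of_all _ fun ω => hB2b _)
  -- per-point integrability of the u-kernels
  have hker : ∀ (l : ℝ), 0 < l → ∀ (s z : ℝ),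
      IntegrableOn (fun u => Real.exp (-l * u) * g (z + s * u)) (Ioi (0:ℝ)) := by
    intro l hl s z
    refine Integrable.mono' ((exp_neg_integrableOn_Ioi 0 hl).const_mul C)
      (Continuous.aestronglyMeasurable (by fun_prop)) (ae_of_all _ fun u => ?_)
    rw [norm_mul, Real.norm_eq_abs (Real.exp _), abs_of_pos (Real.exp_pos _)]
    have h2 := hgb (z + s * u)
    have h4 := (Real.exp_pos (-l * u)).le
    have h5 := norm_nonneg (g (z + s * u))
    nlinarith
  have hker1 : ∀ z : ℝ, IntegrableOn (fun u => Real.exp (-lp * u) * g (z + u)) (Ioi (0:ℝ)) := by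
    intro z
    have h := hker lp hlp 1
    simp only [one_mul] at h
    exact h z
  have hker2 : ∀ z : ℝ, IntegrableOn (fun u => Real.exp (-lm * u) * g (z - u)) (Ioi (0:ℝ)) := by
    intro z
    have h := hker lm hlm (-1)
    simp only [neg_one_mul, ← sub_eq_add_neg] at h
    exact h z
  -- the two gamma Stein identities, lifted to π
  have hE1 : ∫ z, z.1 * g (μ₀ + z.1 - z.2) ∂π
      = α * ∫ z, B1 (μ₀ + z.1 - z.2) ∂π := by
    calc ∫ z, z.1 * g (μ₀ + z.1 - z.2) ∂π
        = ∫ y, ∫ x, x * g (μ₀ + x - y) ∂(gammaMeasure α lp) ∂(gammaMeasure α lm) :=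
          integral_prod_symm _ hF1int
      _ = ∫ y, α * ∫ x, B1 (μ₀ + x - y) ∂(gammaMeasure α lp) ∂(gammaMeasure α lm) := by
          congr 1; funext y
          have hk := VGAux.key hα hlp (fun t => g (μ₀ + t - y)) (by fun_prop)
            (C := C) (fun x => hgb _)
          beta_reduce at hk
          rw [hk]
          congr 1
          congr 1; funext x
          rw [hB1def]
          dsimp only
          congr 1; funext u
          congr 2
          ring
      _ = α * ∫ y, ∫ x, B1 (μ₀ + x - y) ∂(gammaMeasure α lp) ∂(gammaMeasure α lm) :=
          integral_const_mul _ _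
      _ = α * ∫ z, B1 (μ₀ + z.1 - z.2) ∂π := by
          rw [← integral_prod_symm _ hA1int]
  have hE2 : ∫ z, z.2 * g (μ₀ + z.1 - z.2) ∂π
      = α * ∫ z, B2 (μ₀ + z.1 - z.2) ∂π := by
    calc ∫ z, z.2 * g (μ₀ + z.1 - z.2) ∂π
        = ∫ x, ∫ y, y * g (μ₀ + x - y) ∂(gammaMeasure α lm) ∂(gammaMeasure α lp) :=
          integral_prod _ hF2int
      _ = ∫ x, α * ∫ y, B2 (μ₀ + x - y) ∂(gammaMeasure α lm) ∂(gammaMeasure α lp) := by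
          congr 1; funext x
          have hk := VGAux.key hα hlm (fun t => g (μ₀ + x - t)) (by fun_prop)
            (C := C) (fun y => hgb _)
          beta_reduce at hk
          rw [hk]
          congr 1
          congr 1; funext y
          rw [hB2def]
          dsimp only
          congr 1; funext u
          congr 2
          ring
      _ = α * ∫ x, ∫ y, B2 (μ₀ + x - y) ∂(gammaMeasure α lm) ∂(gammaMeasure α lp) :=
          integral_const_mul _ _
      _ = α * ∫ z, B2 (μ₀ + z.1 - z.2) ∂π := by
          rw [← integral_prod _ hA2int]
  -- transfer π-integrals back to Ω
  have hmapB1 : ∫ ω, B1 (X ω) ∂ℙ = ∫ z, B1 (μ₀ + z.1 - z.2) ∂π := by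
    rw [← hmap _ hA1int.1]
    congr 1; funext ω
    rw [hX ω]
  have hmapB2 : ∫ ω, B2 (X ω) ∂ℙ = ∫ z, B2 (μ₀ + z.1 - z.2) ∂π := by
    rw [← hmap _ hA2int.1]
    congr 1; funext ω
    rw [hX ω]
  -- final chain
  calc ∫ ω, (X ω - μ₀) * g (X ω) ∂ℙ
      = ∫ ω, (fun z : ℝ × ℝ => (z.1 - z.2) * g (μ₀ + z.1 - z.2)) (G₁ ω, G₂ ω) ∂ℙ := by
        congr 1; funext ω
        dsimp only
        rw [hX ω]
        congr 1
        ring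
    _ = ∫ z, (z.1 - z.2) * g (μ₀ + z.1 - z.2) ∂π := hmap _ hF0int.1
    _ = (∫ z, z.1 * g (μ₀ + z.1 - z.2) ∂π) - ∫ z, z.2 * g (μ₀ + z.1 - z.2) ∂π := by
        rw [← integral_sub hF1int hF2int]
        congr 1; funext z
        ring
    _ = α * ((∫ ω, B1 (X ω) ∂ℙ) - ∫ ω, B2 (X ω) ∂ℙ) := by
        rw [hE1, hE2, hmapB1, hmapB2]
        ring
    _ = α * ∫ ω, (B1 (X ω) - B2 (X ω)) ∂ℙ := by
        rw [integral_sub hI1int hI2int]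
    _ = α * ∫ ω, (∫ u in Ioi (0:ℝ),
          (Real.exp (-lp * u) * g (X ω + u) - Real.exp (-lm * u) * g (X ω - u))) ∂ℙ := by
        congr 1
        congr 1; funext ω
        rw [hB1def, hB2def]
        dsimp only
        exact (integral_sub (hker1 (X ω)) (hker2 (X ω))).symm
end

section
/- Let λ⁺, λ⁻, r > 0 and μ₀ ∈ ℝ, let G₁ and G₂ be independent gamma random variables with G₁ ~ Ga(r/2, λ⁺) and G₂ ~ Ga(r/2, λ⁻), and set X = μ₀ + G₁ − G₂, σ² = 1/(λ⁺λ⁻) and θ = (1/λ⁺ − 1/λ⁻)/2 (so X ~ VGD₁(μ₀, σ², r, θ)). Then for every g in the Schwartz space S(ℝ) one has the variance-gamma Stein identity E[ σ²(X − μ₀) g″(X) + (σ²r + 2θ(X − μ₀)) g′(X) + (rθ − (X − μ₀)) g(X) ] = 0. -/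
open MeasureTheory ProbabilityTheory Set Filter Topology Real
open scoped ENNReal NNReal

namespace SteinVG

lemma ae_ne_zero : ∀ᵐ (x : ℝ), x ≠ (0:ℝ) := by
  rw [ae_iff]
  have : {x : ℝ | ¬ x ≠ 0} = {0} := by ext x; simp
  rw [this]
  exact measure_singleton 0

lemma integral_gamma {a l : ℝ} (ha : 0 < a) (hl : 0 < l) (f : ℝ → ℝ) :
    ∫ x, f x ∂(gammaMeasure a l) = ∫ x, gammaPDFReal a l x * f x := by
  rw [gammaMeasure]
  have h : (gammaPDF a l) = fun x => ((fun y => (gammaPDFReal a l y).toNNReal) x : ℝ≥0∞) := rfl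
  rw [h, integral_withDensity_eq_integral_smul
      ((measurable_gammaPDFReal a l).real_toNNReal) f]
  refine integral_congr_ae (Eventually.of_forall fun x => ?_)
  simp [NNReal.smul_def, Real.coe_toNNReal _ (gammaPDFReal_nonneg ha hl x)]

lemma integrable_gamma_iff {a l : ℝ} (ha : 0 < a) (hl : 0 < l) (f : ℝ → ℝ) :
    Integrable f (gammaMeasure a l) ↔
      Integrable (fun x => gammaPDFReal a l x * f x) volume := by
  rw [gammaMeasure]
  have h : (gammaPDF a l) = fun x => ((fun y => (gammaPDFReal a l y).toNNReal) x : ℝ≥0∞) := rfl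
  rw [h, integrable_withDensity_iff_integrable_smul
      ((measurable_gammaPDFReal a l).real_toNNReal)]
  refine integrable_congr (Eventually.of_forall fun x => ?_)
  simp [NNReal.smul_def, Real.coe_toNNReal _ (gammaPDFReal_nonneg ha hl x)]

lemma gammaPDFReal_pos_eq {a l x : ℝ} (hx : 0 < x) :
    gammaPDFReal a l x = l ^ a / Real.Gamma a * x ^ (a - 1) * Real.exp (-(l * x)) := by
  simp [gammaPDFReal, if_pos hx.le]

/-- Integrability of `pdf * ψ` for `ψ` of at most linear growth. -/
lemma integrable_pdf_mul {a l : ℝ} (ha : 0 < a) (hl : 0 < l) {ψ : ℝ → ℝ}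
    (hm : AEStronglyMeasurable ψ volume) {C : ℝ}
    (hb : ∀ x, 0 ≤ x → |ψ x| ≤ C * (1 + x)) :
    Integrable (fun x => gammaPDFReal a l x * ψ x) volume := by
  have hC : 0 ≤ C := by have := hb 0 le_rfl; have h0 := abs_nonneg (ψ 0); nlinarith
  have hΓ : 0 < Real.Gamma a := Real.Gamma_pos_of_pos ha
  set K : ℝ := l ^ a / Real.Gamma a * C with hK
  have hK0 : 0 ≤ K := by positivity
  have h1 : IntegrableOn (fun x : ℝ => x ^ (a - 1) * Real.exp (-l * x)) (Ioi 0) volume := by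
    simpa [Real.rpow_one] using
      integrableOn_rpow_mul_exp_neg_mul_rpow (by linarith : (-1:ℝ) < a - 1) zero_lt_one hl
  have h2 : IntegrableOn (fun x : ℝ => x ^ a * Real.exp (-l * x)) (Ioi 0) volume := by
    simpa [Real.rpow_one] using
      integrableOn_rpow_mul_exp_neg_mul_rpow (by linarith : (-1:ℝ) < a) zero_lt_one hl
  set M : ℝ → ℝ := (Ioi (0:ℝ)).indicator
      (fun x => K * ((x ^ (a - 1) + x ^ a) * Real.exp (-l * x))) with hM
  have hMint : Integrable M volume := by
    rw [hM, integrable_indicator_iff measurableSet_Ioi]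
    refine ((h1.add h2).const_mul K).congr (Eventually.of_forall fun x => by simp only [Pi.add_apply]; ring)
  refine Integrable.mono' hMint
    ((measurable_gammaPDFReal a l).aestronglyMeasurable.mul hm) ?_
  filter_upwards [ae_ne_zero] with x hx0
  rcases lt_or_gt_of_ne hx0 with hx | hx
  · have : gammaPDFReal a l x = 0 := by simp [gammaPDFReal, if_neg (not_le.mpr hx)]
    simp [this, hM, indicator_of_notMem (by simp [hx.not_gt] : x ∉ Ioi (0:ℝ))]
  · have hxa : x ^ (a - 1) * x = x ^ a := by
      rw [← Real.rpow_add_one hx.ne' (a - 1)]; norm_num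
    have hpos1 : (0:ℝ) ≤ x ^ (a - 1) := Real.rpow_nonneg hx.le _
    have hexp : (0:ℝ) < Real.exp (-(l * x)) := Real.exp_pos _
    have hpdf : gammaPDFReal a l x
        = l ^ a / Real.Gamma a * x ^ (a - 1) * Real.exp (-(l * x)) := gammaPDFReal_pos_eq hx
    have hc0 : (0:ℝ) ≤ l ^ a / Real.Gamma a := by positivity
    rw [Real.norm_eq_abs, abs_mul, hpdf, hM, indicator_of_mem (mem_Ioi.mpr hx)]
    have habs : |l ^ a / Real.Gamma a * x ^ (a - 1) * Real.exp (-(l * x))|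
        = l ^ a / Real.Gamma a * x ^ (a - 1) * Real.exp (-(l * x)) :=
      abs_of_nonneg (by positivity)
    rw [habs]
    have hbx := hb x hx.le
    have hterm : l ^ a / Real.Gamma a * x ^ (a - 1) * Real.exp (-(l * x)) * |ψ x|
        ≤ l ^ a / Real.Gamma a * x ^ (a - 1) * Real.exp (-(l * x)) * (C * (1 + x)) := by
      have : (0:ℝ) ≤ l ^ a / Real.Gamma a * x ^ (a - 1) * Real.exp (-(l * x)) := by positivity
      exact mul_le_mul_of_nonneg_left hbx this
    refine hterm.trans (le_of_eq ?_)
    rw [hK]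
    have hexp' : Real.exp (-(l * x)) = Real.exp (-l * x) := by ring_nf
    rw [hexp', ← hxa]
    ring

lemma integrable_one_add_abs {a l : ℝ} (ha : 0 < a) (hl : 0 < l) :
    Integrable (fun x => 1 + |x|) (gammaMeasure a l) := by
  rw [integrable_gamma_iff ha hl]
  refine integrable_pdf_mul ha hl
    (continuous_const.add continuous_abs).aestronglyMeasurable (C := 1) ?_
  intro x hx
  rw [abs_of_nonneg (by positivity), abs_of_nonneg hx]
  linarith

/-- **Stein identity for the gamma distribution.** -/
lemma gammaStein {a l : ℝ} (ha : 0 < a) (hl : 0 < l) {φ dφ : ℝ → ℝ}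
    (hd : ∀ x, HasDerivAt φ (dφ x) x) (hc : Continuous dφ) {C : ℝ}
    (hφ : ∀ x, |φ x| ≤ C) (hdφ : ∀ x, |dφ x| ≤ C) :
    ∫ x, (x * dφ x + (a - l * x) * φ x) ∂(gammaMeasure a l) = 0 := by
  have hC : 0 ≤ C := le_trans (abs_nonneg _) (hφ 0)
  have hφc : Continuous φ := continuous_iff_continuousAt.mpr fun x => (hd x).continuousAt
  have hΓ : 0 < Real.Gamma a := Real.Gamma_pos_of_pos ha
  rw [integral_gamma ha hl]
  set ψ : ℝ → ℝ := fun x => x * dφ x + (a - l * x) * φ x with hψ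
  have hψc : Continuous ψ := (continuous_id.mul hc).add
    ((continuous_const.sub (continuous_const.mul continuous_id)).mul hφc)
  have hae : (fun x => gammaPDFReal a l x * ψ x)
      =ᵐ[volume] (Ioi 0).indicator (fun x => gammaPDFReal a l x * ψ x) := by
    filter_upwards [ae_ne_zero] with x hx
    rcases lt_or_gt_of_ne hx with h | h
    · rw [indicator_of_notMem (by simp [h.not_gt])]
      simp [gammaPDFReal, if_neg (not_le.mpr h)]
    · rw [indicator_of_mem (mem_Ioi.mpr h)]
  rw [integral_congr_ae hae, integral_indicator measurableSet_Ioi]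
  set c : ℝ := l ^ a / Real.Gamma a with hc0
  set F : ℝ → ℝ := fun x => c * (x ^ a * Real.exp (-(l * x)) * φ x) with hF
  have hexpc : Continuous fun y : ℝ => Real.exp (-(l * y)) :=
    Real.continuous_exp.comp (continuous_const.mul continuous_id).neg
  have hderiv : ∀ x ∈ Ioi (0:ℝ), HasDerivAt F (gammaPDFReal a l x * ψ x) x := by
    intro x hx
    rw [mem_Ioi] at hx
    have h1 : HasDerivAt (fun y : ℝ => y ^ a) (a * x ^ (a - 1)) x :=
      Real.hasDerivAt_rpow_const (Or.inl hx.ne')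
    have h2 : HasDerivAt (fun y : ℝ => Real.exp (-(l * y))) (-l * Real.exp (-(l * x))) x := by
      have hin : HasDerivAt (fun y : ℝ => -(l * y)) (-l) x := by
        simpa using ((hasDerivAt_id x).const_mul l).fun_neg
      simpa [mul_comm] using hin.exp
    have h3 := ((h1.fun_mul h2).fun_mul (hd x)).const_mul c
    refine h3.congr_deriv ?_
    rw [gammaPDFReal_pos_eq hx, ← hc0, hψ]
    have hxa : x ^ (a - 1) * x = x ^ a := by
      rw [← Real.rpow_add_one hx.ne' (a - 1)]; norm_num
    rw [← hxa]; ring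
  have hcont : ContinuousWithinAt F (Ici 0) 0 := by
    have h1 : ContinuousAt (fun y : ℝ => y ^ a) 0 :=
      Real.continuousAt_rpow_const 0 a (Or.inr ha.le)
    exact (continuousAt_const.mul ((h1.mul hexpc.continuousAt).mul
      hφc.continuousAt)).continuousWithinAt
  have hF0 : F 0 = 0 := by simp [hF, Real.zero_rpow ha.ne']
  have htends : Tendsto F atTop (𝓝 0) := by
    have key := tendsto_rpow_mul_exp_neg_mul_atTop_nhds_zero a l hl
    have key2 : Tendsto (fun x : ℝ => |c| * C * (x ^ a * Real.exp (-l * x)))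
        atTop (𝓝 0) := by
      simpa using key.const_mul (|c| * C)
    refine squeeze_zero_norm' ?_ key2
    filter_upwards [eventually_ge_atTop (0:ℝ)] with x hx
    have h1 : (0:ℝ) ≤ x ^ a := Real.rpow_nonneg hx _
    have h2 : (0:ℝ) < Real.exp (-(l * x)) := Real.exp_pos _
    rw [Real.norm_eq_abs, hF]
    have hstep : |c * (x ^ a * Real.exp (-(l * x)) * φ x)|
        = |c| * (x ^ a * Real.exp (-(l * x)) * |φ x|) := by
      rw [abs_mul, abs_mul, abs_mul, abs_of_nonneg h1, abs_of_nonneg h2.le]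
    rw [hstep, neg_mul]
    nlinarith [hφ x, abs_nonneg c, abs_nonneg (φ x),
      mul_le_mul_of_nonneg_left (hφ x)
        (mul_nonneg (abs_nonneg c) (mul_nonneg h1 h2.le))]
  have hint : IntegrableOn (fun x => gammaPDFReal a l x * ψ x) (Ioi 0) volume := by
    refine (integrable_pdf_mul ha hl hψc.aestronglyMeasurable
      (C := C * (a + 1 + l)) ?_).integrableOn
    intro x hx
    have h2 : |a - l * x| ≤ a + l * x := by
      rw [abs_le]; constructor <;> nlinarith [mul_nonneg hl.le hx]
    have h1 : |ψ x| ≤ x * C + (a + l * x) * C := by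
      rw [hψ]
      calc |x * dφ x + (a - l * x) * φ x|
          ≤ |x * dφ x| + |(a - l * x) * φ x| := abs_add_le _ _
        _ = x * |dφ x| + |a - l * x| * |φ x| := by
            rw [abs_mul, abs_mul, abs_of_nonneg hx]
        _ ≤ x * C + (a + l * x) * C := by
            have hb1 : x * |dφ x| ≤ x * C := mul_le_mul_of_nonneg_left (hdφ x) hx
            have hb2 : |a - l * x| * |φ x| ≤ (a + l * x) * C :=
              mul_le_mul h2 (hφ x) (abs_nonneg _) (by nlinarith [mul_nonneg hl.le hx])
            linarith
    refine h1.trans ?_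
    nlinarith [mul_nonneg hC hx, mul_nonneg (mul_nonneg hC ha.le) hx,
      mul_nonneg hC hl.le]
  rw [integral_Ioi_of_hasDerivAt_of_tendsto hcont hderiv hint htends, hF0, sub_zero]


/-- helper bound -/
lemma abs_lin_le {C v w α β : ℝ} (hv : |v| ≤ C) (hw : |w| ≤ C)
    (hα : 0 ≤ α) (hβ : 0 ≤ β) : |v * α + w * β| ≤ C * α + C * β := by
  calc |v * α + w * β| ≤ |v| * α + |w| * β := by
        refine (abs_add_le _ _).trans ?_
        rw [abs_mul, abs_mul, abs_of_nonneg hα, abs_of_nonneg hβ]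
    _ ≤ C * α + C * β := by nlinarith [abs_nonneg v, abs_nonneg w]

end SteinVG

set_option maxHeartbeats 1000000 in
open SteinVG in
/-- **Stein identity for the variance-gamma distribution `VGD₁(μ₀, σ², r, θ)`.** -/
theorem stein_identity_VGD1
    {Ω : Type*} [MeasureSpace Ω] [IsProbabilityMeasure (ℙ : Measure Ω)]
    (lp lm r μ₀ : ℝ) (hlp : 0 < lp) (hlm : 0 < lm) (hr : 0 < r)
    (G₁ G₂ : Ω → ℝ) (hG₁ : Measurable G₁) (hG₂ : Measurable G₂)
    (hG₁law : Measure.map G₁ ℙ = gammaMeasure (r / 2) lp)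
    (hG₂law : Measure.map G₂ ℙ = gammaMeasure (r / 2) lm)
    (hGindep : IndepFun G₁ G₂ ℙ)
    -- X = μ₀ + G₁ - G₂ ~ VGD₁(μ₀, σ², r, θ)
    (X : Ω → ℝ) (hXdef : X = fun ω => μ₀ + G₁ ω - G₂ ω)
    (σ2 θ : ℝ) (hσ2 : σ2 = 1 / (lp * lm)) (hθ : θ = (1 / lp - 1 / lm) / 2)
    (g : SchwartzMap ℝ ℝ) :
    ∫ ω, (σ2 * (X ω - μ₀) * deriv (deriv (g : ℝ → ℝ)) (X ω)
        + (σ2 * r + 2 * θ * (X ω - μ₀)) * deriv (g : ℝ → ℝ) (X ω)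
        + (r * θ - (X ω - μ₀)) * g (X ω)) ∂ℙ = 0 := by
  subst hXdef hσ2 hθ
  set a : ℝ := r / 2 with hadef
  have ha : 0 < a := by positivity
  haveI h1p : IsProbabilityMeasure (gammaMeasure a lp) := isProbabilityMeasure_gammaMeasure ha hlp
  haveI h2p : IsProbabilityMeasure (gammaMeasure a lm) := isProbabilityMeasure_gammaMeasure ha hlm
  set q : ℝ → ℝ := (g : ℝ → ℝ) with hq
  set q1 : ℝ → ℝ := deriv q with hq1
  set q2 : ℝ → ℝ := deriv q1 with hq2
  -- smoothness
  have hsm : ContDiff ℝ (⊤ : ℕ∞) q := by rw [hq]; exact g.smooth ⊤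
  have hdiff0 : Differentiable ℝ q := hsm.differentiable (by simp)
  have hsm1 : ContDiff ℝ (⊤ : ℕ∞) q1 := by
    rw [hq1]; exact (contDiff_infty_iff_deriv.mp hsm).2
  have hdiff1 : Differentiable ℝ q1 := hsm1.differentiable (by simp)
  have hsm2 : ContDiff ℝ (⊤ : ℕ∞) q2 := by
    rw [hq2]; exact (contDiff_infty_iff_deriv.mp hsm1).2
  have hqc : Continuous q := hsm.continuous
  have hq1c : Continuous q1 := hsm1.continuous
  have hq2c : Continuous q2 := hsm2.continuous
  -- uniform bounds
  obtain ⟨C0, -, hC0⟩ := g.decay 0 0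
  obtain ⟨C1, -, hC1⟩ := g.decay 0 1
  obtain ⟨C2, -, hC2⟩ := g.decay 0 2
  set C : ℝ := max C0 (max C1 C2) with hCdef
  have hbq : ∀ x, |q x| ≤ C := by
    intro x
    have := hC0 x
    simp only [pow_zero, one_mul, norm_iteratedFDeriv_eq_norm_iteratedDeriv,
      iteratedDeriv_zero, Real.norm_eq_abs] at this
    calc |q x| ≤ C0 := by rw [hq]; exact this
      _ ≤ C := le_max_left _ _
  have hbq1 : ∀ x, |q1 x| ≤ C := by
    intro x
    have := hC1 x
    simp only [pow_zero, one_mul, norm_iteratedFDeriv_eq_norm_iteratedDeriv,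
      iteratedDeriv_one, Real.norm_eq_abs] at this
    calc |q1 x| ≤ C1 := by rw [hq1, hq]; exact this
      _ ≤ C := (le_max_left _ _).trans (le_max_right _ _)
  have hbq2 : ∀ x, |q2 x| ≤ C := by
    intro x
    have := hC2 x
    simp only [pow_zero, one_mul, norm_iteratedFDeriv_eq_norm_iteratedDeriv,
      iteratedDeriv_succ, iteratedDeriv_one, Real.norm_eq_abs] at this
    calc |q2 x| ≤ C2 := by rw [hq2, hq1, hq]; exact this
      _ ≤ C := (le_max_right _ _).trans (le_max_right _ _)
  have hC : 0 ≤ C := le_trans (abs_nonneg _) (hbq 0)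
  have hilpm : (0:ℝ) ≤ 1 / (lp * lm) := by positivity
  have hilp : (0:ℝ) ≤ 1 / lp := by positivity
  have hilm : (0:ℝ) ≤ 1 / lm := by positivity
  set B : ℝ := C * (1 / (lp * lm)) + C * (1 / lp) + C * (1 / lm) with hBdef
  have hB : 0 ≤ B := by positivity
  -- product structure
  have hmap : Measure.map (fun ω => (G₁ ω, G₂ ω)) ℙ
      = (gammaMeasure a lp).prod (gammaMeasure a lm) := by
    have := (indepFun_iff_map_prod_eq_prod_map_map hG₁.aemeasurable
      hG₂.aemeasurable).mp hGindep
    rw [this, hG₁law, hG₂law]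
  -- the key functions
  set H₁ : ℝ × ℝ → ℝ :=
    fun p => q1 (μ₀ + p.1 - p.2) * (1 / (lp * lm)) + q (μ₀ + p.1 - p.2) * (1 / lp) with hH₁
  set D₁ : ℝ × ℝ → ℝ :=
    fun p => q2 (μ₀ + p.1 - p.2) * (1 / (lp * lm)) + q1 (μ₀ + p.1 - p.2) * (1 / lp) with hD₁
  set H₂ : ℝ × ℝ → ℝ :=
    fun p => q1 (μ₀ + p.1 - p.2) * (1 / (lp * lm)) - q (μ₀ + p.1 - p.2) * (1 / lm) with hH₂
  set D₂ : ℝ × ℝ → ℝ :=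
    fun p => -(q2 (μ₀ + p.1 - p.2) * (1 / (lp * lm))) + q1 (μ₀ + p.1 - p.2) * (1 / lm) with hD₂
  set S₁ : ℝ × ℝ → ℝ := fun p => p.1 * D₁ p + (a - lp * p.1) * H₁ p with hS₁
  set S₂ : ℝ × ℝ → ℝ := fun p => p.2 * D₂ p + (a - lm * p.2) * H₂ p with hS₂
  set T : ℝ × ℝ → ℝ := fun p =>
      1 / (lp * lm) * (μ₀ + p.1 - p.2 - μ₀) * q2 (μ₀ + p.1 - p.2)
      + (1 / (lp * lm) * r + 2 * ((1 / lp - 1 / lm) / 2) * (μ₀ + p.1 - p.2 - μ₀))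
          * q1 (μ₀ + p.1 - p.2)
      + (r * ((1 / lp - 1 / lm) / 2) - (μ₀ + p.1 - p.2 - μ₀)) * q (μ₀ + p.1 - p.2) with hT
  have hinnerc : Continuous (fun p : ℝ × ℝ => μ₀ + p.1 - p.2) :=
    (continuous_const.add continuous_fst).sub continuous_snd
  have hTc : Continuous T := by
    rw [hT]
    refine (((continuous_const.mul (hinnerc.sub continuous_const)).mul
      (hq2c.comp hinnerc)).add ?_).add ?_
    · exact (continuous_const.add ((continuous_const.mul
        (hinnerc.sub continuous_const)))).mul (hq1c.comp hinnerc)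
    · exact ((continuous_const.sub (hinnerc.sub continuous_const))).mul (hqc.comp hinnerc)
  -- bounds for the four auxiliary functions
  have hbH₁ : ∀ p, |H₁ p| ≤ B := by
    intro p
    rw [hH₁, hBdef]
    refine (abs_lin_le (hbq1 _) (hbq _) hilpm hilp).trans (by nlinarith)
  have hbD₁ : ∀ p, |D₁ p| ≤ B := by
    intro p
    rw [hD₁, hBdef]
    refine (abs_lin_le (hbq2 _) (hbq1 _) hilpm hilp).trans (by nlinarith)
  have hbH₂ : ∀ p, |H₂ p| ≤ B := by
    intro p
    rw [hH₂, hBdef]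
    dsimp only
    have he : q1 (μ₀ + p.1 - p.2) * (1 / (lp * lm)) - q (μ₀ + p.1 - p.2) * (1 / lm)
        = q1 (μ₀ + p.1 - p.2) * (1 / (lp * lm)) + (-(q (μ₀ + p.1 - p.2))) * (1 / lm) := by
      ring
    rw [he]
    refine (abs_lin_le (hbq1 _) (by rw [abs_neg]; exact hbq _) hilpm hilm).trans
      (by nlinarith)
  have hbD₂ : ∀ p, |D₂ p| ≤ B := by
    intro p
    rw [hD₂, hBdef]
    dsimp only
    have he : -(q2 (μ₀ + p.1 - p.2) * (1 / (lp * lm))) + q1 (μ₀ + p.1 - p.2) * (1 / lm)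
        = (-(q2 (μ₀ + p.1 - p.2))) * (1 / (lp * lm)) + q1 (μ₀ + p.1 - p.2) * (1 / lm) := by
      ring
    rw [he]
    refine (abs_lin_le (by rw [abs_neg]; exact hbq2 _) (hbq1 _) hilpm hilm).trans
      (by nlinarith)
  -- integrability of S₁ and S₂
  have hmaj : Integrable (fun p : ℝ × ℝ => (1 + |p.1|) * (1 + |p.2|))
      ((gammaMeasure a lp).prod (gammaMeasure a lm)) :=
    (integrable_one_add_abs ha hlp).mul_prod (integrable_one_add_abs ha hlm)
  have hSbound : ∀ (l' : ℝ), 0 < l' → ∀ (x other dv hv : ℝ), |dv| ≤ B → |hv| ≤ B →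
      |x * dv + (a - l' * x) * hv| ≤ B * (a + 1 + l') * ((1 + |x|) * (1 + |other|)) := by
    intro l' hl' x other dv hv hdv hhv
    have h2 : |a - l' * x| ≤ a + l' * |x| := by
      rw [abs_le]; constructor <;> nlinarith [abs_nonneg x, neg_abs_le x, le_abs_self x,
        mul_le_mul_of_nonneg_left (le_abs_self x) hl'.le,
        mul_le_mul_of_nonneg_left (neg_abs_le x) hl'.le]
    have h1 : |x * dv + (a - l' * x) * hv| ≤ |x| * B + (a + l' * |x|) * B := by
      calc |x * dv + (a - l' * x) * hv| ≤ |x| * |dv| + |a - l' * x| * |hv| := by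
            refine (abs_add_le _ _).trans ?_
            rw [abs_mul, abs_mul]
      _ ≤ |x| * B + (a + l' * |x|) * B := by
            have := mul_le_mul_of_nonneg_left hdv (abs_nonneg x)
            have := mul_le_mul h2 hhv (abs_nonneg _)
              (by nlinarith [abs_nonneg x, mul_nonneg hl'.le (abs_nonneg x)])
            linarith
    refine h1.trans ?_
    have hx := abs_nonneg x
    have ho := abs_nonneg other
    have e1 : |x| * B + (a + l' * |x|) * B ≤ (B * (a + 1 + l')) * (1 + |x|) := by
      nlinarith [mul_nonneg hB hl'.le, mul_nonneg (mul_nonneg hB ha.le) hx]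
    have e2 : (1:ℝ) + |x| ≤ (1 + |x|) * (1 + |other|) := by
      nlinarith [mul_nonneg hx ho]
    have e3 := mul_le_mul_of_nonneg_left e2
      (mul_nonneg hB (by linarith) : (0:ℝ) ≤ B * (a + 1 + l'))
    linarith
  have hS₁c : Continuous S₁ := by
    rw [hS₁, hD₁, hH₁]
    fun_prop
  have hS₂c : Continuous S₂ := by
    rw [hS₂, hD₂, hH₂]
    fun_prop
  have hS₁int : Integrable S₁ ((gammaMeasure a lp).prod (gammaMeasure a lm)) := by
    refine Integrable.mono' (hmaj.const_mul (B * (a + 1 + lp)))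
      hS₁c.aestronglyMeasurable (Eventually.of_forall fun p => ?_)
    rw [Real.norm_eq_abs, hS₁]
    exact hSbound lp hlp p.1 p.2 (D₁ p) (H₁ p) (hbD₁ p) (hbH₁ p)
  have hS₂int : Integrable S₂ ((gammaMeasure a lp).prod (gammaMeasure a lm)) := by
    refine Integrable.mono' (hmaj.const_mul (B * (a + 1 + lm)))
      hS₂c.aestronglyMeasurable (Eventually.of_forall fun p => ?_)
    rw [Real.norm_eq_abs, hS₂]
    have := hSbound lm hlm p.2 p.1 (D₂ p) (H₂ p) (hbD₂ p) (hbH₂ p)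
    calc |p.2 * D₂ p + (a - lm * p.2) * H₂ p|
        ≤ B * (a + 1 + lm) * ((1 + |p.2|) * (1 + |p.1|)) := this
      _ = B * (a + 1 + lm) * ((1 + |p.1|) * (1 + |p.2|)) := by ring
  -- main computation
  show ∫ ω, T (G₁ ω, G₂ ω) ∂ℙ = 0
  have key : ∫ ω, T (G₁ ω, G₂ ω) ∂ℙ
      = ∫ p, T p ∂((gammaMeasure a lp).prod (gammaMeasure a lm)) := by
    rw [← hmap, integral_map (hG₁.prodMk hG₂).aemeasurable hTc.aestronglyMeasurable]
  rw [key]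
  have hTS : T = fun p => S₁ p + S₂ p := by
    funext p
    rw [hT, hS₁, hS₂, hH₁, hD₁, hH₂, hD₂]
    dsimp only
    field_simp
    ring
  rw [hTS, integral_add hS₁int hS₂int]
  have hzero1 : ∫ p, S₁ p ∂((gammaMeasure a lp).prod (gammaMeasure a lm)) = 0 := by
    rw [integral_prod_symm _ hS₁int]
    have inner : ∀ y : ℝ, ∫ x, S₁ (x, y) ∂(gammaMeasure a lp) = 0 := by
      intro y
      have hre : (fun x => S₁ (x, y)) = fun x =>
          x * (fun t => D₁ (t, y)) x + (a - lp * x) * (fun t => H₁ (t, y)) x := by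
        funext x; rw [hS₁]
      rw [hre]
      refine gammaStein ha hlp (φ := fun t => H₁ (t, y)) (dφ := fun t => D₁ (t, y))
        ?_ ?_ (C := B) (fun t => hbH₁ (t, y)) (fun t => hbD₁ (t, y))
      · intro t
        have hin : HasDerivAt (fun s : ℝ => μ₀ + s - y) 1 t := by
          simpa using ((hasDerivAt_id t).const_add μ₀).sub_const y
        have d1 : HasDerivAt (fun s => q (μ₀ + s - y)) (q1 (μ₀ + t - y)) t := by
          have := ((hdiff0 (μ₀ + t - y)).hasDerivAt).comp t hin
          rw [← hq1, mul_one] at this; exact this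
        have d2 : HasDerivAt (fun s => q1 (μ₀ + s - y)) (q2 (μ₀ + t - y)) t := by
          have := ((hdiff1 (μ₀ + t - y)).hasDerivAt).comp t hin
          rw [← hq2, mul_one] at this; exact this
        have := (d2.mul_const (1 / (lp * lm))).add (d1.mul_const (1 / lp))
        rw [hH₁, hD₁]
        exact this
      · rw [hD₁]
        have hc1 : Continuous (fun t : ℝ => μ₀ + t - y) := by fun_prop
        exact ((hq2c.comp hc1).mul continuous_const).add
          ((hq1c.comp hc1).mul continuous_const)
    rw [integral_congr_ae (Eventually.of_forall inner), integral_zero]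
  have hzero2 : ∫ p, S₂ p ∂((gammaMeasure a lp).prod (gammaMeasure a lm)) = 0 := by
    rw [integral_prod _ hS₂int]
    have inner : ∀ x : ℝ, ∫ y, S₂ (x, y) ∂(gammaMeasure a lm) = 0 := by
      intro x
      have hre : (fun y => S₂ (x, y)) = fun y =>
          y * (fun t => D₂ (x, t)) y + (a - lm * y) * (fun t => H₂ (x, t)) y := by
        funext y; rw [hS₂]
      rw [hre]
      refine gammaStein ha hlm (φ := fun t => H₂ (x, t)) (dφ := fun t => D₂ (x, t))
        ?_ ?_ (C := B) (fun t => hbH₂ (x, t)) (fun t => hbD₂ (x, t))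
      · intro t
        have hin : HasDerivAt (fun s : ℝ => μ₀ + x - s) (-1) t := by
          simpa using (hasDerivAt_id t).const_sub (μ₀ + x)
        have d1 : HasDerivAt (fun s => q (μ₀ + x - s)) (q1 (μ₀ + x - t) * (-1)) t := by
          have := ((hdiff0 (μ₀ + x - t)).hasDerivAt).comp t hin
          rw [← hq1] at this; exact this
        have d2 : HasDerivAt (fun s => q1 (μ₀ + x - s)) (q2 (μ₀ + x - t) * (-1)) t := by
          have := ((hdiff1 (μ₀ + x - t)).hasDerivAt).comp t hin
          rw [← hq2] at this; exact this
        have hcomb := (d2.mul_const (1 / (lp * lm))).fun_sub (d1.mul_const (1 / lm))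
        rw [hH₂, hD₂]
        dsimp only
        refine hcomb.congr_deriv ?_
        ring
      · rw [hD₂]
        have hc1 : Continuous (fun t : ℝ => μ₀ + x - t) := by fun_prop
        exact ((hq2c.comp hc1).mul continuous_const).neg.add
          ((hq1c.comp hc1).mul continuous_const)
    rw [integral_congr_ae (Eventually.of_forall inner), integral_zero]
  rw [hzero1, hzero2, add_zero]
end

section
/- Let α⁺, λ⁺, α⁻, λ⁻ > 0, let G₁ and G₂ be independent gamma random variables with G₁ ~ Ga(α⁺, λ⁺) and G₂ ~ Ga(α⁻, λ⁻), and set X = G₁ − G₂ (so X has the bilateral-gamma distribution BGD(α⁺, λ⁺, α⁻, λ⁻)). Then for every g in the Schwartz space S(ℝ) one has the bilateral-gamma Stein identity E[ X g″(X) + ((α⁺ + α⁻) − (λ⁺ − λ⁻)X) g′(X) + ((α⁺λ⁻ − α⁻λ⁺) − λ⁺λ⁻ X) g(X) ] = 0. -/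
open MeasureTheory ProbabilityTheory Set Real Filter Topology
open scoped ENNReal NNReal

namespace SteinBG

lemma schwartz_bound (f : SchwartzMap ℝ ℝ) : ∃ C, 0 < C ∧ ∀ x, |f x| ≤ C := by
  obtain ⟨C, hC, h⟩ := f.decay 0 0
  refine ⟨C, hC, fun x => ?_⟩
  have := h x
  simpa [norm_iteratedFDeriv_zero, Real.norm_eq_abs] using this

lemma integrableOn_rpow_exp {s r : ℝ} (hs : -1 < s) (hr : 0 < r) :
    IntegrableOn (fun x : ℝ => x ^ s * Real.exp (-(r * x))) (Ioi 0) := by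
  have h := integrableOn_rpow_mul_exp_neg_mul_rpow hs zero_lt_one hr
  refine h.congr_fun (fun x hx => ?_) measurableSet_Ioi
  beta_reduce; rw [Real.rpow_one]; ring_nf

lemma integral_gammaMeasure {a r : ℝ} (ha : 0 < a) (hr : 0 < r) (h : ℝ → ℝ) :
    ∫ x, h x ∂(gammaMeasure a r) = ∫ x, gammaPDFReal a r x * h x := by
  rw [gammaMeasure]
  have hm : Measurable fun x => (gammaPDFReal a r x).toNNReal :=
    (measurable_gammaPDFReal a r).real_toNNReal
  have he : gammaPDF a r = fun x => ((gammaPDFReal a r x).toNNReal : ℝ≥0∞) := rfl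
  rw [he, integral_withDensity_eq_integral_smul hm]
  congr 1; ext x
  simp [NNReal.smul_def, Real.coe_toNNReal _ (gammaPDFReal_nonneg ha hr x)]


lemma gamma_stein {a r : ℝ} (ha : 0 < a) (hr : 0 < r) (f f' : ℝ → ℝ)
    (hd : ∀ x, HasDerivAt f (f' x) x) (hf'c : Continuous f')
    (C : ℝ) (hC : 0 < C) (hb : ∀ x, |f x| ≤ C) (hb' : ∀ x, |f' x| ≤ C) :
    ∫ x, (x * f' x + (a - r * x) * f x) ∂(gammaMeasure a r) = 0 := by
  have hfc : Continuous f := by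
    rw [continuous_iff_continuousAt]; exact fun x => (hd x).continuousAt
  set c : ℝ := r ^ a / Real.Gamma a with hc
  have hcpos : 0 < c := by
    have := Real.Gamma_pos_of_pos ha
    positivity
  set S : ℝ → ℝ := fun x => x * f' x + (a - r * x) * f x with hS
  have hScont : Continuous S := by fun_prop
  set F : ℝ → ℝ := fun x => c * (x ^ a * Real.exp (-(r * x)) * f x) with hF
  set G : ℝ → ℝ := fun x => c * (x ^ (a - 1) * Real.exp (-(r * x)) * S x) with hG
  -- step A : rewrite as integral over Ioi 0
  have stepA : ∫ x, gammaPDFReal a r x * S x = ∫ x in Ioi 0, G x := by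
    rw [← integral_indicator measurableSet_Ioi]
    apply integral_congr_ae
    have h0 : ∀ᵐ x : ℝ ∂volume, x ≠ 0 := by
      rw [ae_iff]
      convert Real.volume_singleton (a := 0) using 2
      ext x; simp
    filter_upwards [h0] with x hx
    rcases lt_or_gt_of_ne hx with hx' | hx'
    · have : x ∉ Ioi (0:ℝ) := by simp [hx'.le]
      simp [gammaPDFReal, not_le.mpr hx', Set.indicator_of_notMem this]
    · rw [Set.indicator_of_mem (mem_Ioi.mpr hx')]
      simp only [gammaPDFReal, if_pos hx'.le, hG, hc]
      ring
  -- derivative computation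
  have hderiv : ∀ x ∈ Ioi 0, HasDerivAt F (G x) x := by
    intro x hx
    have hx0 : (0:ℝ) < x := hx
    have h1 : HasDerivAt (fun x : ℝ => x ^ a) (a * x ^ (a - 1)) x :=
      Real.hasDerivAt_rpow_const (Or.inl hx0.ne')
    have h2 : HasDerivAt (fun x : ℝ => Real.exp (-(r * x))) (Real.exp (-(r * x)) * (-(r * 1))) x := by
      exact (((hasDerivAt_id x).const_mul r).neg).exp
    have h3 : HasDerivAt F _ x := ((h1.mul h2).mul (hd x)).const_mul c
    have hxa : x ^ a = x ^ (a - 1) * x := by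
      rw [show a = (a - 1) + 1 by ring, Real.rpow_add hx0, Real.rpow_one]
      ring_nf
    convert h3 using 1
    simp only [hG, hS, Pi.mul_apply]
    rw [hxa]
    ring
  -- continuity at 0
  have hcont : ContinuousWithinAt F (Ici 0) 0 := by
    have : Continuous fun x : ℝ => Real.exp (-(r * x)) * f x := by fun_prop
    have hrp : ContinuousAt (fun x : ℝ => x ^ a) 0 := by
      apply Real.continuousAt_rpow_const
      right; exact ha.le
    have h4 : ContinuousAt F 0 := by
      have := (continuousAt_const : ContinuousAt (fun _ : ℝ => c) 0).mul (hrp.mul this.continuousAt)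
      refine this.congr (Eventually.of_forall fun x => ?_)
      simp only [hF, Pi.mul_apply]; ring
    exact h4.continuousWithinAt
  -- integrability of G on Ioi 0
  have hGint : IntegrableOn G (Ioi 0) := by
    have hBd : IntegrableOn (fun x : ℝ =>
        c * C * (1 + r) * (x ^ a * Real.exp (-(r * x)))
          + c * C * a * (x ^ (a - 1) * Real.exp (-(r * x)))) (Ioi 0) := by
      exact ((integrableOn_rpow_exp (by linarith) hr).const_mul _).add
        ((integrableOn_rpow_exp (by linarith) hr).const_mul _)
    refine Integrable.mono' hBd ?_ ?_
    · have hm : Measurable G := by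
        apply Measurable.const_mul
        exact ((measurable_id'.pow_const _).mul (by fun_prop)).mul hScont.measurable
      exact hm.aestronglyMeasurable.restrict
    · rw [ae_restrict_iff' measurableSet_Ioi]
      refine ae_of_all _ fun x hx => ?_
      have hx0 : (0:ℝ) < x := hx
      have hxa : x ^ a = x ^ (a - 1) * x := by
        rw [show a = (a - 1) + 1 by ring, Real.rpow_add hx0, Real.rpow_one]; ring_nf
      have hS1 : |S x| ≤ C * ((1 + r) * x + a) := by
        have t1 : |x * f' x| ≤ x * C := by
          rw [abs_mul, abs_of_pos hx0]
          exact mul_le_mul_of_nonneg_left (hb' x) hx0.le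
        have t2 : |(a - r * x) * f x| ≤ (a + r * x) * C := by
          rw [abs_mul]
          refine mul_le_mul ?_ (hb x) (abs_nonneg _) (by positivity)
          calc |a - r * x| ≤ |a| + |r * x| := by
                rw [sub_eq_add_neg]; exact (abs_add_le _ _).trans (by rw [abs_neg])
            _ = a + r * x := by rw [abs_of_pos ha, abs_of_pos (by positivity)]
        calc |S x| ≤ |x * f' x| + |(a - r * x) * f x| := abs_add_le _ _
          _ ≤ x * C + (a + r * x) * C := by linarith
          _ = C * ((1 + r) * x + a) := by ring
      have hpow : (0:ℝ) ≤ x ^ (a - 1) := Real.rpow_nonneg hx0.le _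
      have hexp : (0:ℝ) < Real.exp (-(r * x)) := Real.exp_pos _
      have : ‖G x‖ ≤ c * (x ^ (a - 1) * Real.exp (-(r * x))) * (C * ((1 + r) * x + a)) := by
        have : ‖G x‖ = c * (x ^ (a - 1) * Real.exp (-(r * x))) * |S x| := by
          simp only [hG, Real.norm_eq_abs, abs_mul, mul_assoc]
          rw [abs_of_pos hcpos, abs_of_nonneg hpow, abs_of_pos hexp]
        rw [this]
        exact mul_le_mul_of_nonneg_left hS1 (by positivity)
      refine this.trans (le_of_eq ?_)
      rw [hxa]; ring
  -- tendsto at infinity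
  have htend : Tendsto F atTop (𝓝 0) := by
    have h1 : Tendsto (fun x : ℝ => c * C * (x ^ a * Real.exp (-r * x))) atTop (𝓝 0) := by
      have := (tendsto_rpow_mul_exp_neg_mul_atTop_nhds_zero a r hr).const_mul (c * C)
      simpa using this
    refine squeeze_zero_norm' ?_ h1
    filter_upwards [eventually_ge_atTop (0:ℝ)] with x hx
    have hpow : (0:ℝ) ≤ x ^ a := Real.rpow_nonneg hx _
    have : ‖F x‖ = c * (x ^ a * Real.exp (-(r * x))) * |f x| := by
      simp only [hF, Real.norm_eq_abs, abs_mul]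
      rw [abs_of_pos hcpos, abs_of_nonneg hpow, abs_of_pos (Real.exp_pos _)]
      ring
    rw [this]
    calc c * (x ^ a * Real.exp (-(r * x))) * |f x|
        ≤ c * (x ^ a * Real.exp (-(r * x))) * C :=
          mul_le_mul_of_nonneg_left (hb x) (by positivity)
      _ = c * C * (x ^ a * Real.exp (-r * x)) := by ring_nf
  have hFTC := integral_Ioi_of_hasDerivAt_of_tendsto hcont hderiv hGint htend
  have hF0 : F 0 = 0 := by
    simp [hF, Real.zero_rpow ha.ne']
  rw [integral_gammaMeasure ha hr, stepA, hFTC, hF0, sub_zero]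

lemma integrable_abs_gamma {a r : ℝ} (ha : 0 < a) (hr : 0 < r) :
    Integrable (fun x => |x|) (gammaMeasure a r) := by
  rw [gammaMeasure, show gammaPDF a r = fun x => ((gammaPDFReal a r x).toNNReal : ℝ≥0∞) from rfl,
    integrable_withDensity_iff_integrable_smul ((measurable_gammaPDFReal a r).real_toNNReal)]
  have heq : (fun x : ℝ => (gammaPDFReal a r x).toNNReal • |x|)
      = (Ioi (0:ℝ)).indicator (fun x => gammaPDFReal a r x * |x|) := by
    funext x
    rcases le_or_gt x 0 with hx | hx
    · have h1 : x ∉ Ioi (0:ℝ) := by simpa using hx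
      rw [Set.indicator_of_notMem h1]
      rcases eq_or_lt_of_le hx with h | h
      · simp [h]
      · simp [gammaPDFReal, not_le.mpr h]
    · rw [Set.indicator_of_mem (mem_Ioi.mpr hx)]
      simp [NNReal.smul_def, Real.coe_toNNReal _ (gammaPDFReal_nonneg ha hr x)]
  rw [heq, integrable_indicator_iff measurableSet_Ioi]
  have hint : IntegrableOn
      (fun x : ℝ => (r ^ a / Real.Gamma a) * (x ^ a * Real.exp (-(r * x)))) (Ioi 0) :=
    (integrableOn_rpow_exp (by linarith) hr).const_mul _
  refine hint.congr_fun (fun x hx => ?_) measurableSet_Ioi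
  have hx0 : (0:ℝ) < x := hx
  have hxa : x ^ a = x ^ (a - 1) * x := by
    rw [show a = (a - 1) + 1 by ring, Real.rpow_add hx0, Real.rpow_one]; ring_nf
  simp only [gammaPDFReal, if_pos hx0.le, abs_of_pos hx0]
  rw [hxa]; ring



end SteinBG


open MeasureTheory ProbabilityTheory Set SteinBG

/-- **Stein identity for the bilateral-gamma distribution `BGD(α⁺, λ⁺, α⁻, λ⁻)`.**
If `X = G₁ - G₂` with `G₁ ~ Ga(α⁺, λ⁺)`, `G₂ ~ Ga(α⁻, λ⁻)` independent, then for
every Schwartz function `g`,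
`E[X g''(X) + ((α⁺+α⁻) - (λ⁺-λ⁻)X) g'(X) + ((α⁺λ⁻ - α⁻λ⁺) - λ⁺λ⁻X) g(X)] = 0`. -/
theorem stein_identity_bilateral_gamma
    {Ω : Type*} [MeasureSpace Ω] [IsProbabilityMeasure (ℙ : Measure Ω)]
    (αp lp αm lm : ℝ) (hαp : 0 < αp) (hlp : 0 < lp) (hαm : 0 < αm) (hlm : 0 < lm)
    (G₁ G₂ : Ω → ℝ) (hG₁ : Measurable G₁) (hG₂ : Measurable G₂)
    (hG₁law : Measure.map G₁ ℙ = gammaMeasure αp lp)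
    (hG₂law : Measure.map G₂ ℙ = gammaMeasure αm lm)
    (hGindep : IndepFun G₁ G₂ ℙ)
    -- X = G₁ - G₂ ~ BGD(α⁺, λ⁺, α⁻, λ⁻)
    (X : Ω → ℝ) (hXdef : X = fun ω => G₁ ω - G₂ ω)
    (g : SchwartzMap ℝ ℝ) :
    ∫ ω, (X ω * deriv (deriv (g : ℝ → ℝ)) (X ω)
        + ((αp + αm) - (lp - lm) * X ω) * deriv (g : ℝ → ℝ) (X ω)
        + ((αp * lm - αm * lp) - lp * lm * X ω) * g (X ω)) ∂ℙ = 0 := by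
  subst hXdef
  haveI hP1 : IsProbabilityMeasure (gammaMeasure αp lp) := isProbabilityMeasure_gammaMeasure hαp hlp
  haveI hP2 : IsProbabilityMeasure (gammaMeasure αm lm) := isProbabilityMeasure_gammaMeasure hαm hlm
  set μ₁ := gammaMeasure αp lp with hμ₁
  set μ₂ := gammaMeasure αm lm with hμ₂
  set g1 : SchwartzMap ℝ ℝ := SchwartzMap.derivCLM ℝ ℝ g with hg1
  set g2 : SchwartzMap ℝ ℝ := SchwartzMap.derivCLM ℝ ℝ g1 with hg2
  have hg1f : (g1 : ℝ → ℝ) = deriv (g : ℝ → ℝ) := by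
    funext x; rw [hg1]; exact SchwartzMap.derivCLM_apply (𝕜 := ℝ) g x
  have hg2f : (g2 : ℝ → ℝ) = deriv (deriv (g : ℝ → ℝ)) := by
    funext x
    rw [hg2, SchwartzMap.derivCLM_apply, hg1f]
  obtain ⟨C0, hC0, hbg⟩ := schwartz_bound g
  obtain ⟨C1, hC1, hbg1⟩ := schwartz_bound g1
  obtain ⟨C2, hC2, hbg2⟩ := schwartz_bound g2
  rw [hg1f] at hbg1
  rw [hg2f] at hbg2
  obtain ⟨C, hCdef⟩ : ∃ C : ℝ, C = (1 + lp + lm) * (C0 + C1 + C2) := ⟨_, rfl⟩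
  have hCpos : 0 < C := by rw [hCdef]; positivity
  -- the two test functions and their derivatives
  set φf : ℝ → ℝ := fun x => deriv (g : ℝ → ℝ) x + lm * (g : ℝ → ℝ) x with hφf
  set φd : ℝ → ℝ := fun x => deriv (deriv (g : ℝ → ℝ)) x + lm * deriv (g : ℝ → ℝ) x with hφd
  set ψf : ℝ → ℝ := fun x => deriv (g : ℝ → ℝ) x - lp * (g : ℝ → ℝ) x with hψf
  set ψd : ℝ → ℝ := fun x => deriv (deriv (g : ℝ → ℝ)) x - lp * deriv (g : ℝ → ℝ) x with hψd
  have hT0 : (0:ℝ) < C0 + C1 + C2 := by positivity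
  have haux : ∀ u v : ℝ, |u| ≤ C0 + C1 + C2 → |v| ≤ C0 + C1 + C2 → |u + lm * v| ≤ C := by
    intro u v hu hv
    calc |u + lm * v| ≤ |u| + lm * |v| := by
          refine (abs_add_le _ _).trans ?_
          rw [abs_mul, abs_of_pos hlm]
      _ ≤ (C0 + C1 + C2) + lm * (C0 + C1 + C2) := by
          have := mul_le_mul_of_nonneg_left hv hlm.le
          linarith
      _ ≤ C := by
          rw [hCdef]
          have hnn : (0:ℝ) ≤ lp * (C0 + C1 + C2) := by positivity
          nlinarith
  have haux' : ∀ u v : ℝ, |u| ≤ C0 + C1 + C2 → |v| ≤ C0 + C1 + C2 → |u - lp * v| ≤ C := by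
    intro u v hu hv
    calc |u - lp * v| ≤ |u| + lp * |v| := by
          rw [sub_eq_add_neg]
          refine (abs_add_le _ _).trans ?_
          rw [abs_neg, abs_mul, abs_of_pos hlp]
      _ ≤ (C0 + C1 + C2) + lp * (C0 + C1 + C2) := by
          have := mul_le_mul_of_nonneg_left hv hlp.le
          linarith
      _ ≤ C := by
          rw [hCdef]
          have hnn : (0:ℝ) ≤ lm * (C0 + C1 + C2) := by positivity
          nlinarith
  have hbφf : ∀ x, |φf x| ≤ C :=
    fun x => haux _ _ ((hbg1 x).trans (by linarith)) ((hbg x).trans (by linarith))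
  have hbφd : ∀ x, |φd x| ≤ C :=
    fun x => haux _ _ ((hbg2 x).trans (by linarith)) ((hbg1 x).trans (by linarith))
  have hbψf : ∀ x, |ψf x| ≤ C :=
    fun x => haux' _ _ ((hbg1 x).trans (by linarith)) ((hbg x).trans (by linarith))
  have hbψd : ∀ x, |ψd x| ≤ C :=
    fun x => haux' _ _ ((hbg2 x).trans (by linarith)) ((hbg1 x).trans (by linarith))
  -- derivatives
  have hD1 : ∀ x, HasDerivAt (g : ℝ → ℝ) (deriv (g : ℝ → ℝ) x) x :=
    fun x => g.differentiable.differentiableAt.hasDerivAt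
  have hD2 : ∀ x, HasDerivAt (deriv (g : ℝ → ℝ)) (deriv (deriv (g : ℝ → ℝ)) x) x := by
    intro x
    have h := g1.differentiable.differentiableAt (x := x) |>.hasDerivAt
    rwa [hg1f] at h
  have hφD : ∀ x, HasDerivAt φf (φd x) x := fun x => (hD2 x).add ((hD1 x).const_mul lm)
  have hψD : ∀ x, HasDerivAt ψf (ψd x) x := fun x => (hD2 x).sub ((hD1 x).const_mul lp)
  -- continuity
  have hc1 : Continuous (deriv (g : ℝ → ℝ)) := hg1f ▸ g1.continuous
  have hc2 : Continuous (deriv (deriv (g : ℝ → ℝ))) := hg2f ▸ g2.continuous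
  have hφfc : Continuous φf := hc1.add (continuous_const.mul g.continuous)
  have hφdc : Continuous φd := hc2.add (continuous_const.mul hc1)
  have hψfc : Continuous ψf := hc1.sub (continuous_const.mul g.continuous)
  have hψdc : Continuous ψd := hc2.sub (continuous_const.mul hc1)
  -- the two halves of the Stein operator
  set A : ℝ × ℝ → ℝ := fun p => p.1 * φd (p.1 - p.2) + (αp - lp * p.1) * φf (p.1 - p.2) with hA
  set B : ℝ × ℝ → ℝ := fun p => p.2 * (-ψd (p.1 - p.2)) + (αm - lm * p.2) * ψf (p.1 - p.2) with hB
  have hAzero : ∀ y : ℝ, ∫ x, A (x, y) ∂μ₁ = 0 := by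
    intro y
    have h := gamma_stein hαp hlp (fun x => φf (x - y)) (fun x => φd (x - y))
      (fun x => by
        have hs : HasDerivAt (fun x : ℝ => x - y) 1 x := (hasDerivAt_id x).sub_const y
        simpa [Function.comp_def] using (hφD (x - y)).comp x hs)
      (hφdc.comp (continuous_id.sub continuous_const))
      C hCpos (fun x => hbφf _) (fun x => hbφd _)
    simpa [hA] using h
  have hBzero : ∀ x : ℝ, ∫ y, B (x, y) ∂μ₂ = 0 := by
    intro x
    have h := gamma_stein hαm hlm (fun y => ψf (x - y)) (fun y => -ψd (x - y))
      (fun y => by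
        have hs : HasDerivAt (fun y : ℝ => x - y) (-1) y := (hasDerivAt_id y).const_sub x
        simpa [Function.comp_def] using (hψD (x - y)).comp y hs)
      ((hψdc.comp (continuous_const.sub continuous_id)).neg)
      C hCpos (fun y => hbψf _) (fun y => by simpa [abs_neg] using hbψd (x - y))
    simpa [hB] using h
  -- continuity of A, B
  have hsubc : Continuous fun p : ℝ × ℝ => p.1 - p.2 := continuous_fst.sub continuous_snd
  have hAc : Continuous A :=
    (continuous_fst.mul (hφdc.comp hsubc)).add
      ((continuous_const.sub (continuous_const.mul continuous_fst)).mul (hφfc.comp hsubc))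
  have hBc : Continuous B :=
    (continuous_snd.mul ((hψdc.comp hsubc).neg)).add
      ((continuous_const.sub (continuous_const.mul continuous_snd)).mul (hψfc.comp hsubc))
  -- integrability of A and B on the product
  have hAint : Integrable A (μ₁.prod μ₂) := by
    have hmom1 : Integrable (fun x : ℝ => C * (1 + αp + lp) * (1 + |x|)) μ₁ :=
      (((integrable_const (1 : ℝ)).add (integrable_abs_gamma hαp hlp)).const_mul _)
    have hprod : Integrable (fun p : ℝ × ℝ => C * (1 + αp + lp) * (1 + |p.1|)) (μ₁.prod μ₂) :=
      (hmom1.mul_prod (integrable_const (1 : ℝ))).congr (ae_of_all _ fun p => mul_one _)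
    refine Integrable.mono' hprod hAc.aestronglyMeasurable (ae_of_all _ fun p => ?_)
    have t1 : |p.1 * φd (p.1 - p.2)| ≤ |p.1| * C := by
      rw [abs_mul]; exact mul_le_mul_of_nonneg_left (hbφd _) (abs_nonneg _)
    have t2 : |(αp - lp * p.1) * φf (p.1 - p.2)| ≤ (αp + lp * |p.1|) * C := by
      rw [abs_mul]
      refine mul_le_mul ?_ (hbφf _) (abs_nonneg _) (by positivity)
      calc |αp - lp * p.1| ≤ |αp| + |lp * p.1| := by
            rw [sub_eq_add_neg]; exact (abs_add_le _ _).trans (by rw [abs_neg])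
        _ = αp + lp * |p.1| := by rw [abs_of_pos hαp, abs_mul, abs_of_pos hlp]
    have habs : (0:ℝ) ≤ |p.1| := abs_nonneg _
    calc ‖A p‖ ≤ |p.1 * φd (p.1 - p.2)| + |(αp - lp * p.1) * φf (p.1 - p.2)| := abs_add_le _ _
      _ ≤ |p.1| * C + (αp + lp * |p.1|) * C := by linarith
      _ ≤ C * (1 + αp + lp) * (1 + |p.1|) := by
          have key : C * (1 + αp + lp) * (1 + |p.1|) - (|p.1| * C + (αp + lp * |p.1|) * C)
              = C + lp * C + αp * C * |p.1| := by ring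
          have hnn : (0:ℝ) ≤ C + lp * C + αp * C * |p.1| := by positivity
          linarith
  have hBint : Integrable B (μ₁.prod μ₂) := by
    have hmom2 : Integrable (fun y : ℝ => C * (1 + αm + lm) * (1 + |y|)) μ₂ :=
      (((integrable_const (1 : ℝ)).add (integrable_abs_gamma hαm hlm)).const_mul _)
    have hprod : Integrable (fun p : ℝ × ℝ => C * (1 + αm + lm) * (1 + |p.2|)) (μ₁.prod μ₂) :=
      ((integrable_const (1 : ℝ)).mul_prod hmom2).congr (ae_of_all _ fun p => one_mul _)
    refine Integrable.mono' hprod hBc.aestronglyMeasurable (ae_of_all _ fun p => ?_)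
    have t1 : |p.2 * (-ψd (p.1 - p.2))| ≤ |p.2| * C := by
      rw [abs_mul, abs_neg]; exact mul_le_mul_of_nonneg_left (hbψd _) (abs_nonneg _)
    have t2 : |(αm - lm * p.2) * ψf (p.1 - p.2)| ≤ (αm + lm * |p.2|) * C := by
      rw [abs_mul]
      refine mul_le_mul ?_ (hbψf _) (abs_nonneg _) (by positivity)
      calc |αm - lm * p.2| ≤ |αm| + |lm * p.2| := by
            rw [sub_eq_add_neg]; exact (abs_add_le _ _).trans (by rw [abs_neg])
        _ = αm + lm * |p.2| := by rw [abs_of_pos hαm, abs_mul, abs_of_pos hlm]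
    have habs : (0:ℝ) ≤ |p.2| := abs_nonneg _
    calc ‖B p‖ ≤ |p.2 * (-ψd (p.1 - p.2))| + |(αm - lm * p.2) * ψf (p.1 - p.2)| := abs_add_le _ _
      _ ≤ |p.2| * C + (αm + lm * |p.2|) * C := by linarith
      _ ≤ C * (1 + αm + lm) * (1 + |p.2|) := by
          have key : C * (1 + αm + lm) * (1 + |p.2|) - (|p.2| * C + (αm + lm * |p.2|) * C)
              = C + lm * C + αm * C * |p.2| := by ring
          have hnn : (0:ℝ) ≤ C + lm * C + αm * C * |p.2| := by positivity
          linarith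
  -- the distribution of the pair
  have hmap : Measure.map (fun ω => (G₁ ω, G₂ ω)) ℙ = μ₁.prod μ₂ := by
    rw [← hG₁law, ← hG₂law]
    exact (indepFun_iff_map_prod_eq_prod_map_map hG₁.aemeasurable hG₂.aemeasurable).mp hGindep
  have hpair : Measurable fun ω => (G₁ ω, G₂ ω) := hG₁.prodMk hG₂
  calc ∫ ω, ((fun ω => G₁ ω - G₂ ω) ω * deriv (deriv (g : ℝ → ℝ)) ((fun ω => G₁ ω - G₂ ω) ω)
        + ((αp + αm) - (lp - lm) * (fun ω => G₁ ω - G₂ ω) ω) * deriv (g : ℝ → ℝ) ((fun ω => G₁ ω - G₂ ω) ω)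
        + ((αp * lm - αm * lp) - lp * lm * (fun ω => G₁ ω - G₂ ω) ω) * g ((fun ω => G₁ ω - G₂ ω) ω)) ∂ℙ
      = ∫ ω, (A (G₁ ω, G₂ ω) + B (G₁ ω, G₂ ω)) ∂ℙ := by
        refine integral_congr_ae (ae_of_all _ fun ω => ?_)
        simp only [hA, hB, hφf, hφd, hψf, hψd]
        ring
    _ = ∫ p, (A p + B p) ∂(μ₁.prod μ₂) := by
        rw [← hmap, integral_map hpair.aemeasurable]
        exact (hAc.add hBc).aestronglyMeasurable
    _ = (∫ p, A p ∂(μ₁.prod μ₂)) + ∫ p, B p ∂(μ₁.prod μ₂) := integral_add hAint hBint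
    _ = 0 := by
        rw [integral_prod_symm A hAint, integral_prod B hBint]
        simp [hAzero, hBzero]
end

section
/- Let α⁺, λ⁺, α⁻, λ⁻ > 0, let G₁ and G₂ be independent gamma random variables with G₁ ~ Ga(α⁺, λ⁺) and G₂ ~ Ga(α⁻, λ⁻), and set X = G₁ − G₂ (so X has the bilateral-gamma distribution BGD(α⁺, λ⁺, α⁻, λ⁻)). Then for every 0 < κ < λ⁺ the Esscher premium satisfies E[X e^{κX}] / E[e^{κX}] = α⁺/(λ⁺ − κ) − α⁻/(λ⁻ + κ). -/
open MeasureTheory ProbabilityTheory Set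

namespace EsscherAux

open Real
open scoped ENNReal NNReal

lemma gamma_integral_aux (a r t : ℝ) (n : ℕ) (ha : 0 < a) (hr : 0 < r) (ht : t < r) :
    Integrable (fun x => x ^ n * Real.exp (t * x)) (gammaMeasure a r) ∧
    ∫ x, x ^ n * Real.exp (t * x) ∂(gammaMeasure a r)
      = r ^ a / Real.Gamma a * ((1 / (r - t)) ^ (a + n) * Real.Gamma (a + n)) := by
  set s := r - t with hs_def
  have hs : 0 < s := by simp only [hs_def]; linarith
  set f : ℝ → ℝ := fun x => x ^ n * Real.exp (t * x) with hf_def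
  set g : ℝ → ℝ := fun x => gammaPDFReal a r x * f x with hg_def
  have hpt : ∀ x ∈ Ioi (0:ℝ), g x = r ^ a / Real.Gamma a * (x ^ (a + n - 1) * Real.exp (-(s * x))) := by
    intro x hx
    have hx0 : (0:ℝ) < x := hx
    have e1 : x ^ (a-1) * x ^ (n:ℝ) = x ^ (a + n - 1) := by
      rw [← Real.rpow_add hx0]; ring_nf
    have e2 : Real.exp (-(r*x)) * Real.exp (t*x) = Real.exp (-(s*x)) := by
      rw [← Real.exp_add]; congr 1; simp only [hs_def]; ring
    simp only [hg_def, hf_def, gammaPDFReal, if_pos hx0.le]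
    rw [← Real.rpow_natCast x n, ← e1, ← e2]; ring
  have hIoi : IntegrableOn g (Ioi 0) := by
    have h1 : IntegrableOn (fun x : ℝ => x ^ (a + n - 1) * Real.exp (-s * x ^ (1:ℝ))) (Ioi 0) :=
      integrableOn_rpow_mul_exp_neg_mul_rpow (by push_cast; linarith) zero_lt_one hs
    have h2 : IntegrableOn (fun x : ℝ => r ^ a / Real.Gamma a *
        (x ^ (a + n - 1) * Real.exp (-(s * x)))) (Ioi 0) := by
      refine MeasureTheory.IntegrableOn.congr_fun (h1.const_mul (r ^ a / Real.Gamma a))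
        (fun x hx => ?_) measurableSet_Ioi
      rw [Real.rpow_one, neg_mul]
    exact MeasureTheory.IntegrableOn.congr_fun h2 (fun x hx => (hpt x hx).symm) measurableSet_Ioi
  have hg0 : ∀ x < (0:ℝ), g x = 0 := by
    intro x hx
    simp [hg_def, gammaPDFReal, not_le.mpr hx]
  have hgInt : Integrable g := by
    have hIio : IntegrableOn g (Iio 0) :=
      MeasureTheory.IntegrableOn.congr_fun (integrableOn_zero)
        (fun x hx => (hg0 x hx).symm) measurableSet_Iio
    have hsing : IntegrableOn g {(0:ℝ)} := by
      rw [IntegrableOn, Measure.restrict_eq_zero.mpr (volume_singleton)]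
      exact integrable_zero_measure
    have hunion := (hIio.union hsing).union hIoi
    rwa [Iio_union_right, Iic_union_Ioi, integrableOn_univ] at hunion
  have hIntVal : ∫ x, g x
      = r ^ a / Real.Gamma a * ((1 / s) ^ (a + n) * Real.Gamma (a + n)) := by
    have h0 : ∫ x, g x = ∫ x in Ioi 0, g x := by
      refine (setIntegral_eq_integral_of_ae_compl_eq_zero ?_).symm
      filter_upwards [compl_mem_ae_iff.mpr (volume_singleton (a := (0:ℝ)))] with x hx hx'
      have hxle : x ≤ 0 := not_lt.mp (by simpa using hx')
      have hxlt : x < 0 := lt_of_le_of_ne hxle (by simpa using hx)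
      exact hg0 x hxlt
    rw [h0, setIntegral_congr_fun measurableSet_Ioi hpt, integral_const_mul]
    congr 1
    have h3 := integral_rpow_mul_exp_neg_mul_Ioi (a := a + n) (r := s) (by positivity) hs
    rw [show a + (n:ℝ) - 1 = (a + n) - 1 by ring]
    exact h3
  have hrepr : gammaMeasure a r
      = volume.withDensity (fun x => ((gammaPDFReal a r x).toNNReal : ℝ≥0∞)) := rfl
  have hmeas : Measurable (fun x => (gammaPDFReal a r x).toNNReal) :=
    (measurable_gammaPDFReal a r).real_toNNReal
  have hsmul : ∀ x, (gammaPDFReal a r x).toNNReal • f x = g x := by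
    intro x
    rw [NNReal.smul_def, smul_eq_mul, Real.coe_toNNReal _ (gammaPDFReal_nonneg ha hr x)]
  constructor
  · rw [hrepr, integrable_withDensity_iff_integrable_smul hmeas]
    exact hgInt.congr (Filter.Eventually.of_forall fun x => (hsmul x).symm)
  · rw [hrepr, integral_withDensity_eq_integral_smul hmeas]
    refine (integral_congr_ae (Filter.Eventually.of_forall fun x => ?_)).trans hIntVal
    exact hsmul x

lemma gamma_exp (a r t : ℝ) (ha : 0 < a) (hr : 0 < r) (ht : t < r) :
    Integrable (fun x => Real.exp (t * x)) (gammaMeasure a r) ∧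
    ∫ x, Real.exp (t * x) ∂(gammaMeasure a r) = r ^ a / (r - t) ^ a := by
  have h := gamma_integral_aux a r t 0 ha hr ht
  simp only [pow_zero, one_mul, Nat.cast_zero, add_zero] at h
  refine ⟨h.1, ?_⟩
  rw [h.2]
  have hΓ : Real.Gamma a ≠ 0 := (Real.Gamma_pos_of_pos ha).ne'
  have hst : (0:ℝ) < r - t := by linarith
  have h4 : (0:ℝ) < (r - t) ^ a := Real.rpow_pos_of_pos hst a
  rw [one_div, Real.inv_rpow hst.le]
  field_simp

lemma gamma_id_exp (a r t : ℝ) (ha : 0 < a) (hr : 0 < r) (ht : t < r) :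
    Integrable (fun x => x * Real.exp (t * x)) (gammaMeasure a r) ∧
    ∫ x, x * Real.exp (t * x) ∂(gammaMeasure a r)
      = a * r ^ a / ((r - t) ^ a * (r - t)) := by
  have h := gamma_integral_aux a r t 1 ha hr ht
  simp only [pow_one, Nat.cast_one] at h
  refine ⟨h.1, ?_⟩
  rw [h.2, Real.Gamma_add_one ha.ne']
  have hΓ : Real.Gamma a ≠ 0 := (Real.Gamma_pos_of_pos ha).ne'
  have hst : (0:ℝ) < r - t := by linarith
  rw [Real.rpow_add (by positivity) a 1, Real.rpow_one, one_div,
    Real.inv_rpow hst.le, ← Real.rpow_neg_one (r - t)]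
  rw [show ((r - t) ^ a)⁻¹ = (r - t) ^ (-a) by rw [← Real.rpow_neg hst.le]]
  have h1 : (r - t) ^ a ≠ 0 := (Real.rpow_pos_of_pos hst a).ne'
  have h2 : (r - t) ^ (-a) = ((r - t) ^ a)⁻¹ := by rw [← Real.rpow_neg hst.le]
  have h3 : (r - t) ^ (-1 : ℝ) = (r - t)⁻¹ := Real.rpow_neg_one _
  rw [h2, h3]
  field_simp

end EsscherAux

open EsscherAux

/-- **Esscher premium principle for the bilateral-gamma distribution.**
If `X = G₁ - G₂` with `G₁ ~ Ga(α⁺, λ⁺)`, `G₂ ~ Ga(α⁻, λ⁻)` independent, then for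
every `0 < κ < λ⁺`, `E[X e^{κX}]/E[e^{κX}] = α⁺/(λ⁺ - κ) - α⁻/(λ⁻ + κ)`. -/
theorem esscher_premium_bilateral_gamma
    {Ω : Type*} [MeasureSpace Ω] [IsProbabilityMeasure (ℙ : Measure Ω)]
    (αp lp αm lm : ℝ) (hαp : 0 < αp) (hlp : 0 < lp) (hαm : 0 < αm) (hlm : 0 < lm)
    (G₁ G₂ : Ω → ℝ) (hG₁ : Measurable G₁) (hG₂ : Measurable G₂)
    (hG₁law : Measure.map G₁ ℙ = gammaMeasure αp lp)
    (hG₂law : Measure.map G₂ ℙ = gammaMeasure αm lm)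
    (hGindep : IndepFun G₁ G₂ ℙ)
    -- X = G₁ - G₂ ~ BGD(α⁺, λ⁺, α⁻, λ⁻)
    (X : Ω → ℝ) (hXdef : X = fun ω => G₁ ω - G₂ ω)
    (κ : ℝ) (hκ : 0 < κ) (hκlp : κ < lp) :
    (∫ ω, X ω * Real.exp (κ * X ω) ∂ℙ) / (∫ ω, Real.exp (κ * X ω) ∂ℙ)
      = αp / (lp - κ) - αm / (lm + κ) := by
  have hκlm : -κ < lm := by linarith
  -- measurable functions on ℝ
  have hφ : Measurable fun x : ℝ => Real.exp (κ * x) :=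
    (measurable_const_mul κ).exp
  have hψ : Measurable fun x : ℝ => Real.exp (-κ * x) :=
    (measurable_const_mul (-κ)).exp
  have hφ' : Measurable fun x : ℝ => x * Real.exp (κ * x) := measurable_id.mul hφ
  have hψ' : Measurable fun x : ℝ => x * Real.exp (-κ * x) := measurable_id.mul hψ
  -- pull back integrals and integrability along the laws
  have pull : ∀ (G : Ω → ℝ) (a r : ℝ), Measurable G → Measure.map G ℙ = gammaMeasure a r →
      ∀ f : ℝ → ℝ, Measurable f →
      (Integrable f (gammaMeasure a r) → Integrable (fun ω => f (G ω)) ℙ) ∧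
      (∫ ω, f (G ω) ∂ℙ) = ∫ x, f x ∂(gammaMeasure a r) := by
    intro G a r hG hlaw f hf
    constructor
    · intro hi
      have := (integrable_map_measure hf.aestronglyMeasurable hG.aemeasurable).mp
        (by rwa [hlaw])
      exact this
    · rw [← hlaw, integral_map hG.aemeasurable
        (by rw [hlaw]; exact hf.aestronglyMeasurable)]
  -- the four basic quantities
  obtain ⟨hIa1, hVa1⟩ := gamma_exp αp lp κ hαp hlp hκlp
  obtain ⟨hIa2, hVa2⟩ := gamma_id_exp αp lp κ hαp hlp hκlp
  obtain ⟨hIb1, hVb1⟩ := gamma_exp αm lm (-κ) hαm hlm hκlm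
  obtain ⟨hIb2, hVb2⟩ := gamma_id_exp αm lm (-κ) hαm hlm hκlm
  obtain ⟨hP1, hE1⟩ := pull G₁ αp lp hG₁ hG₁law _ hφ
  obtain ⟨hP1', hE1'⟩ := pull G₁ αp lp hG₁ hG₁law _ hφ'
  obtain ⟨hP2, hE2⟩ := pull G₂ αm lm hG₂ hG₂law _ hψ
  obtain ⟨hP2', hE2'⟩ := pull G₂ αm lm hG₂ hG₂law _ hψ'
  have hI1 : Integrable (fun ω => Real.exp (κ * G₁ ω)) ℙ := hP1 hIa1
  have hI1' : Integrable (fun ω => G₁ ω * Real.exp (κ * G₁ ω)) ℙ := hP1' hIa2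
  have hI2 : Integrable (fun ω => Real.exp (-κ * G₂ ω)) ℙ := hP2 hIb1
  have hI2' : Integrable (fun ω => G₂ ω * Real.exp (-κ * G₂ ω)) ℙ := hP2' hIb2
  set A₁ := lp ^ αp / (lp - κ) ^ αp with hA1
  set A₂ := αp * lp ^ αp / ((lp - κ) ^ αp * (lp - κ)) with hA2
  set B₁ := lm ^ αm / (lm - -κ) ^ αm with hB1
  set B₂ := αm * lm ^ αm / ((lm - -κ) ^ αm * (lm - -κ)) with hB2
  have hEA1 : ∫ ω, Real.exp (κ * G₁ ω) ∂ℙ = A₁ := by rw [hE1, hVa1]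
  have hEA2 : ∫ ω, G₁ ω * Real.exp (κ * G₁ ω) ∂ℙ = A₂ := by rw [hE1', hVa2]
  have hEB1 : ∫ ω, Real.exp (-κ * G₂ ω) ∂ℙ = B₁ := by rw [hE2, hVb1]
  have hEB2 : ∫ ω, G₂ ω * Real.exp (-κ * G₂ ω) ∂ℙ = B₂ := by rw [hE2', hVb2]
  -- independence of the composed variables
  have ind11 : IndepFun (fun ω => Real.exp (κ * G₁ ω)) (fun ω => Real.exp (-κ * G₂ ω)) ℙ :=
    hGindep.comp hφ hψ
  have ind21 : IndepFun (fun ω => G₁ ω * Real.exp (κ * G₁ ω))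
      (fun ω => Real.exp (-κ * G₂ ω)) ℙ := hGindep.comp hφ' hψ
  have ind12 : IndepFun (fun ω => Real.exp (κ * G₁ ω))
      (fun ω => G₂ ω * Real.exp (-κ * G₂ ω)) ℙ := hGindep.comp hφ hψ'
  -- key exponent splitting
  have hsplit : ∀ ω, Real.exp (κ * X ω) = Real.exp (κ * G₁ ω) * Real.exp (-κ * G₂ ω) := by
    intro ω
    rw [hXdef, ← Real.exp_add]
    congr 1
    ring
  -- denominator
  have hden : ∫ ω, Real.exp (κ * X ω) ∂ℙ = A₁ * B₁ := by
    have := ind11.integral_mul_eq_mul_integral hI1.aestronglyMeasurable hI2.aestronglyMeasurable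
    simp_rw [hsplit]
    rw [show (fun ω => Real.exp (κ * G₁ ω) * Real.exp (-κ * G₂ ω))
      = (fun ω => Real.exp (κ * G₁ ω)) * (fun ω => Real.exp (-κ * G₂ ω)) from rfl] at *
    rw [this, hEA1, hEB1]
  -- numerator
  have hnum : ∫ ω, X ω * Real.exp (κ * X ω) ∂ℙ = A₂ * B₁ - A₁ * B₂ := by
    have hptw : ∀ ω, X ω * Real.exp (κ * X ω)
        = (G₁ ω * Real.exp (κ * G₁ ω)) * Real.exp (-κ * G₂ ω)
          - Real.exp (κ * G₁ ω) * (G₂ ω * Real.exp (-κ * G₂ ω)) := by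
      intro ω
      rw [hsplit, hXdef]
      ring
    have hIU : Integrable (fun ω => (G₁ ω * Real.exp (κ * G₁ ω)) * Real.exp (-κ * G₂ ω)) ℙ :=
      ind21.integrable_mul hI1' hI2
    have hIV : Integrable (fun ω => Real.exp (κ * G₁ ω) * (G₂ ω * Real.exp (-κ * G₂ ω))) ℙ :=
      ind12.integrable_mul hI1 hI2'
    simp_rw [hptw]
    rw [integral_sub hIU hIV]
    have e1 := ind21.integral_mul_eq_mul_integral hI1'.aestronglyMeasurable hI2.aestronglyMeasurable
    have e2 := ind12.integral_mul_eq_mul_integral hI1.aestronglyMeasurable hI2'.aestronglyMeasurable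
    rw [show (fun ω => (G₁ ω * Real.exp (κ * G₁ ω)) * Real.exp (-κ * G₂ ω))
      = (fun ω => G₁ ω * Real.exp (κ * G₁ ω)) * (fun ω => Real.exp (-κ * G₂ ω)) from rfl,
      e1, hEA2, hEB1,
      show (fun ω => Real.exp (κ * G₁ ω) * (G₂ ω * Real.exp (-κ * G₂ ω)))
      = (fun ω => Real.exp (κ * G₁ ω)) * (fun ω => G₂ ω * Real.exp (-κ * G₂ ω)) from rfl,
      e2, hEA1, hEB2]
  -- final computation
  rw [hnum, hden]
  have hp : (0:ℝ) < lp - κ := by linarith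
  have hm : (0:ℝ) < lm + κ := by linarith
  have hPp : (0:ℝ) < lp ^ αp := Real.rpow_pos_of_pos hlp _
  have hQp : (0:ℝ) < (lp - κ) ^ αp := Real.rpow_pos_of_pos hp _
  have hMp : (0:ℝ) < lm ^ αm := Real.rpow_pos_of_pos hlm _
  have hRp : (0:ℝ) < (lm - -κ) ^ αm := Real.rpow_pos_of_pos (by linarith) _
  rw [hA1, hA2, hB1, hB2]
  rw [show lm - -κ = lm + κ by ring] at *
  have hRp' : (0:ℝ) < (lm + κ) ^ αm := by
    rw [show lm + κ = lm - -κ by ring]; exact Real.rpow_pos_of_pos (by linarith) _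
  field_simp
end
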